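/- arXiv:2101.06822 — 9 statements merged into one kernel-verified Lean document; each statement's English description precedes it below -/
import Mathlib

section
/- Let P be a submonoid of a group G and for each natural number k let Ẇ^k := {p₁⁻¹p₂p₃⁻¹p₄⋯p_{2k-1}⁻¹p_{2k} : p₁,…,p_{2k} ∈ P} with Ẇ⁰ := {e}. If Ẇ^k = Ẇ^{k+m} for some m ≥ 1, then Ẇ^k = Ẇ^{k+m} for every m ≥ 1, and Ẇ^k is a subgroup of G. -/
/-- `Ẇ^k`: the set of products of `k` left quotients `p₁⁻¹p₂ ⋯ p_{2k-1}⁻¹p_{2k}`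
of elements of the submonoid `P`; by convention `Ẇ⁰ = {e}`. -/
def Wdot {G : Type*} [Group G] (P : Submonoid G) (k : ℕ) : Set G :=
  {g : G | ∃ l : List (P × P), l.length = k ∧
    (l.map fun x => ((x.1 : G))⁻¹ * (x.2 : G)).prod = g}

lemma one_mem_Wdot {G : Type*} [Group G] (P : Submonoid G) (k : ℕ) :
    (1 : G) ∈ Wdot P k :=
  ⟨List.replicate k (1, 1), by simp, by simp⟩

lemma mul_mem_Wdot {G : Type*} [Group G] {P : Submonoid G} {a b : ℕ} {x y : G}
    (hx : x ∈ Wdot P a) (hy : y ∈ Wdot P b) : x * y ∈ Wdot P (a + b) := by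
  obtain ⟨l₁, hl₁, rfl⟩ := hx
  obtain ⟨l₂, hl₂, rfl⟩ := hy
  exact ⟨l₁ ++ l₂, by simp [hl₁, hl₂], by simp⟩

lemma Wdot_mono {G : Type*} [Group G] (P : Submonoid G) (a b : ℕ) :
    Wdot P a ⊆ Wdot P (a + b) := fun x hx => by
  simpa using mul_mem_Wdot hx (one_mem_Wdot P b)

lemma inv_mem_Wdot {G : Type*} [Group G] {P : Submonoid G} {k : ℕ} {x : G}
    (hx : x ∈ Wdot P k) : x⁻¹ ∈ Wdot P k := by
  obtain ⟨l, hl, rfl⟩ := hx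
  refine ⟨(l.map Prod.swap).reverse, by simp [hl], ?_⟩
  rw [List.prod_inv_reverse]
  simp [Function.comp_def, mul_inv_rev]

lemma Wdot_succ_mem {G : Type*} [Group G] {P : Submonoid G} {n : ℕ} {g : G}
    (hg : g ∈ Wdot P (n + 1)) :
    ∃ q ∈ Wdot P 1, ∃ w ∈ Wdot P n, g = q * w := by
  obtain ⟨l, hl, rfl⟩ := hg
  cases l with
  | nil => simp at hl
  | cons a t =>
    refine ⟨(↑a.1 : G)⁻¹ * ↑a.2, ⟨[a], rfl, by simp⟩,
      (t.map fun x => ((x.1 : G))⁻¹ * (x.2 : G)).prod, ⟨t, by simpa using hl, rfl⟩, by simp⟩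

/-- If `Ẇ^k = Ẇ^{k+m}` for some `m ≥ 1`, then `Ẇ^k = Ẇ^{k+m}` for every `m ≥ 1`, and
`Ẇ^k` is a subgroup of `G`. -/
theorem statement1 {G : Type*} [Group G] (P : Submonoid G) (k m : ℕ) (hm : 1 ≤ m)
    (h : Wdot P k = Wdot P (k + m)) :
    (∀ m' : ℕ, 1 ≤ m' → Wdot P k = Wdot P (k + m')) ∧
      ∃ H : Subgroup G, (H : Set G) = Wdot P k := by
  -- first, Wdot k = Wdot (k+1)
  have h1 : Wdot P k = Wdot P (k + 1) := by
    apply Set.Subset.antisymm (Wdot_mono P k 1)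
    have : Wdot P (k + 1) ⊆ Wdot P (k + m) := by
      have := Wdot_mono P (k + 1) (m - 1)
      rwa [show k + 1 + (m - 1) = k + m by omega] at this
    rw [← h] at this
    exact this
  -- all shifts, including 0
  have hall : ∀ m' : ℕ, Wdot P k = Wdot P (k + m') := by
    intro m'
    induction m' with
    | zero => rfl
    | succ n ih =>
      apply Set.Subset.antisymm (Wdot_mono P k (n + 1))
      intro g hg
      obtain ⟨q, hq, w, hw, rfl⟩ := Wdot_succ_mem hg
      have hw' : w ∈ Wdot P (k + n) := hw
      rw [← ih] at hw'
      have : q * w ∈ Wdot P (1 + k) := mul_mem_Wdot hq hw'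
      rw [show 1 + k = k + 1 by omega, ← h1] at this
      exact this
  have hmul : ∀ a b : G, a ∈ Wdot P k → b ∈ Wdot P k → a * b ∈ Wdot P k := by
    intro a b ha hb
    have : a * b ∈ Wdot P (k + k) := mul_mem_Wdot ha hb
    rwa [← hall k] at this
  exact ⟨fun m' _ => hall m',
    ⟨{ carrier := Wdot P k
       one_mem' := one_mem_Wdot P k
       mul_mem' := fun ha hb => hmul _ _ ha hb
       inv_mem' := fun hx => inv_mem_Wdot hx }, rfl⟩⟩
end

section
/- Let P be a submonoid of a group H and let γ : H → G be a group homomorphism into a group G whose restriction to P is injective. For each word α = (p₁, …, p_{2k}) in P, computing constructible ideals inside H: (1) if γ(α̇) = e in G but α̇ ≠ e in H, then K(α) = ∅; (2) γ(K(α)) = γ(P) ∩ γ(p_{2k}⁻¹p_{2k-1})·γ(P) ∩ γ(p_{2k}⁻¹p_{2k-1}p_{2k-2}⁻¹p_{2k-3})·γ(P) ∩ ⋯ ∩ γ(p_{2k}⁻¹p_{2k-1}p_{2k-2}⁻¹⋯p₂⁻¹p₁)·γ(P); that is, γ(K(α)) equals the constructible ideal of the submonoid γ(P) of G associated with the word (γ(p₁),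 …, γ(p_{2k})). -/
namespace PaperToeplitz

variable {G : Type*} [Group G]

/-- A word `(p₁, p₂, …, p_{2k-1}, p_{2k})` in `P`, encoded as its list of consecutive pairs
`[(p₁,p₂), …, (p_{2k-1},p_{2k})]`. Concatenation of words is list append. -/
abbrev Word (P : Submonoid G) : Type _ := List (P × P)

/-- The generalized left quotient `α̇ := p₁⁻¹ p₂ ⋯ p_{2k-1}⁻¹ p_{2k} ∈ G`.
A word is *neutral* if `α̇ = 1`. -/
def dotProd {P : Submonoid G} (α : Word P) : G :=
  (α.map fun x => ((x.1 : G))⁻¹ * (x.2 : G)).prod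

/-- The reverse word `α̃ := (p_{2k}, p_{2k-1}, …, p₂, p₁)`. -/
def rev {P : Submonoid G} (α : Word P) : Word P :=
  α.reverse.map fun x => (x.2, x.1)

/-- The iterated quotient set
`Q(α) := {e, p_{2k}⁻¹p_{2k-1}, p_{2k}⁻¹p_{2k-1}p_{2k-2}⁻¹p_{2k-3}, …, p_{2k}⁻¹p_{2k-1}⋯p₂⁻¹p₁}`,
realized as the set of prefix products. -/
def Qset {P : Submonoid G} (α : Word P) : Set G :=
  {g | ∃ n : ℕ, ((α.reverse.map fun x => ((x.2 : G))⁻¹ * (x.1 : G)).take n).prod = g}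

/-- The left translate `xP = {xq : q ∈ P}` of `P`, as a subset of `G`. -/
def lcos (P : Submonoid G) (x : G) : Set G := {y : G | x⁻¹ * y ∈ P}

/-- The constructible ideal `K(α) := ⋂_{g ∈ Q(α)} gP` (a subset of `P` since `e ∈ Q(α)`). -/
def Kset {P : Submonoid G} (α : Word P) : Set G :=
  ⋂ g ∈ Qset α, lcos P g

/-- The collection `𝔍(P)` of constructible right ideals of `P`. -/
def CIdeals (P : Submonoid G) : Set (Set G) := {S | ∃ α : Word P, Kset α = S}

end PaperToeplitz

namespace PaperToeplitz

/-- The image of an element of `P` in `P.map γ`. -/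
def memMap {H G : Type*} [Group H] [Group G] {P : Submonoid H} (γ : H →* G) (p : P) :
    P.map γ :=
  ⟨γ p, Submonoid.mem_map_of_mem γ p.2⟩

/-- The image word `(γ(p₁), …, γ(p_{2k}))`, a word in the submonoid `γ(P)` of `G`. -/
def mapWord {H G : Type*} [Group H] [Group G] {P : Submonoid H} (γ : H →* G)
    (α : Word P) : Word (P.map γ) :=
  α.map fun x => (memMap γ x.1, memMap γ x.2)

/-! `x` lies in `K(α)` iff `g⁻¹x ∈ P` for every prefix product `g` of the quotients
`p_{2k}⁻¹p_{2k-1}, p_{2k-2}⁻¹p_{2k-3}, …`. Passing to the next prefix replaces `g⁻¹x` by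
`c⁻¹(b g⁻¹x)` with `b, c ∈ P`, and injectivity of `γ` on `P` yields `c⁻¹y ∈ P` from `y ∈ P` and
`γ(c⁻¹y) ∈ γ(P)`; so membership in `K(γ(α))` lifts, one prefix at a time, to membership in `K(α)`.
For (1), a point `x ∈ K(α)` gives `x, α̇x ∈ P` with the same image under `γ`, forcing `α̇ = 1`. -/

section
variable {H G : Type*} [Group H] [Group G]

theorem inv_mul_mem_of_map_mem {P : Submonoid H} {γ : H →* G}
    (hinj : Set.InjOn γ (P : Set H)) {c y : H} (hc : c ∈ P) (hy : y ∈ P)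
    (h : γ (c⁻¹ * y) ∈ P.map γ) : c⁻¹ * y ∈ P := by
  obtain ⟨r, hr, hγr⟩ := Submonoid.mem_map.mp h
  have hcr : c * r = y := hinj (mul_mem hc hr) hy (by simp [hγr])
  rwa [← hcr, inv_mul_cancel_left]

theorem take_succ_cons_prod_inv_mul (a x : H) (L : List H) (n : ℕ) :
    (((a :: L).take (n + 1)).prod)⁻¹ * x = ((L.take n).prod)⁻¹ * (a⁻¹ * x) := by
  simp [mul_inv_rev, mul_assoc]

theorem forall_take_prod_inv_mul_mem_of_map {P : Submonoid H} {γ : H →* G}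
    (hinj : Set.InjOn γ (P : Set H)) {L : List H}
    (hL : ∀ a ∈ L, ∃ b ∈ P, ∃ c ∈ P, a = b⁻¹ * c) {x : H} (hx : x ∈ P)
    (h : ∀ n, γ (((L.take n).prod)⁻¹ * x) ∈ P.map γ) :
    ∀ n, ((L.take n).prod)⁻¹ * x ∈ P := by
  induction L generalizing x with
  | nil => simpa using hx
  | cons a L ih =>
    obtain ⟨b, hb, c, hc, rfl⟩ := hL a List.mem_cons_self
    have hstep (n : ℕ) : (((b⁻¹ * c :: L).take (n + 1)).prod)⁻¹ * x
        = ((L.take n).prod)⁻¹ * (c⁻¹ * (b * x)) := by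
      rw [take_succ_cons_prod_inv_mul]; group
    have hcbx : c⁻¹ * (b * x) ∈ P := by
      refine inv_mul_mem_of_map_mem hinj hc (mul_mem hb hx) ?_
      simpa [mul_assoc] using h 1
    rintro (_ | n)
    · simpa using hx
    · rw [hstep]
      exact ih (fun a ha ↦ hL a (List.mem_cons_of_mem _ ha)) hcbx
        (fun n ↦ hstep n ▸ h (n + 1)) n

/-- The list `[p_{2k}⁻¹p_{2k-1}, …, p₂⁻¹p₁]`, whose prefix products make up `Q(α)`. -/
def quotients {P : Submonoid H} (α : Word P) : List H :=
  α.reverse.map fun x => (x.2 : H)⁻¹ * x.1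

theorem mem_Kset_iff {P : Submonoid H} {α : Word P} {x : H} :
    x ∈ Kset α ↔ ∀ n, (((quotients α).take n).prod)⁻¹ * x ∈ P := by
  simp [Kset, Qset, lcos, quotients]

theorem prod_quotients {P : Submonoid H} (α : Word P) :
    (quotients α).prod = (dotProd α)⁻¹ := by
  simp [quotients, dotProd, List.prod_inv_reverse, List.map_reverse, Function.comp_def,
    mul_inv_rev]

theorem quotients_mapWord {P : Submonoid H} (γ : H →* G) (α : Word P) :
    quotients (mapWord γ α) = (quotients α).map γ := by
  simp [quotients, mapWord, memMap, List.map_reverse, Function.comp_def]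

theorem mem_Kset_mapWord_iff {P : Submonoid H} {γ : H →* G} {α : Word P} {z : G} :
    z ∈ Kset (mapWord γ α) ↔ ∀ n, (γ ((quotients α).take n).prod)⁻¹ * z ∈ P.map γ := by
  simp [mem_Kset_iff, quotients_mapWord, ← List.map_take, map_list_prod]

theorem Kset_eq_empty_of_map_dotProd_eq_one {P : Submonoid H} {γ : H →* G}
    (hinj : Set.InjOn γ (P : Set H)) {α : Word P} (hγ : γ (dotProd α) = 1)
    (hne : dotProd α ≠ 1) : Kset α = ∅ := by
  refine Set.eq_empty_of_forall_notMem fun x hx ↦ hne ?_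
  have hxP : x ∈ P := by simpa using mem_Kset_iff.mp hx 0
  have hdxP : dotProd α * x ∈ P := by
    simpa [prod_quotients] using mem_Kset_iff.mp hx (quotients α).length
  have : dotProd α * x = x := hinj hdxP hxP (by simp [hγ])
  simpa using this

theorem image_Kset {P : Submonoid H} {γ : H →* G} (hinj : Set.InjOn γ (P : Set H))
    (α : Word P) : γ '' Kset α = Kset (mapWord γ α) := by
  ext z
  constructor
  · rintro ⟨x, hx, rfl⟩
    refine mem_Kset_mapWord_iff.mpr fun n ↦ ?_
    simpa using Submonoid.mem_map_of_mem γ (mem_Kset_iff.mp hx n)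
  · intro hz
    have hz' := mem_Kset_mapWord_iff.mp hz
    obtain ⟨p, hp, rfl⟩ : ∃ p ∈ P, γ p = z := by simpa using hz' 0
    have hquot : ∀ a ∈ quotients α, ∃ b ∈ P, ∃ c ∈ P, a = b⁻¹ * c := by
      simp only [quotients, List.mem_map]
      rintro _ ⟨y, -, rfl⟩
      exact ⟨y.2, y.2.2, y.1, y.1.2, rfl⟩
    refine ⟨p, mem_Kset_iff.mpr ?_, rfl⟩
    exact forall_take_prod_inv_mul_mem_of_map hinj hquot hp (by simpa using hz')

end

/-- If `γ : H → G` is a group homomorphism injective on the submonoid `P` of `H`, then for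
every word `α` in `P`: (1) if `γ(α̇) = e` in `G` but `α̇ ≠ e` in `H`, then `K(α) = ∅`; and
(2) `γ(K(α))` is the constructible ideal of the submonoid `γ(P)` of `G` associated with the
image word `(γ(p₁), …, γ(p_{2k}))`. -/
theorem statement5 {H G : Type*} [Group H] [Group G] (P : Submonoid H) (γ : H →* G)
    (hinj : Set.InjOn γ (P : Set H)) (α : Word P) :
    (γ (dotProd α) = 1 → dotProd α ≠ 1 → Kset α = ∅) ∧
    γ '' Kset α = Kset (mapWord γ α) :=
  ⟨fun hγ hne ↦ Kset_eq_empty_of_map_dotProd_eq_one hinj hγ hne, image_Kset hinj α⟩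

end PaperToeplitz
end

section
/- Let P be a submonoid of a group G, let B be a unital C*-algebra, and let w : P → B be a map satisfying: (T1) w_e = 1; (T2) ẇ_α = 0 for every neutral word α with K(α) = ∅; (T3) ẇ_α = ẇ_β for all neutral words α, β with K(α) = K(β). Then: (1) w_p* w_p = 1 for every p ∈ P (each w_p is an isometry); (2) w_p w_q = w_{pq} for all p, q ∈ P; (3) the set {ẇ_α : α a neutral word} is a family of mutually commuting self-adjoint projections that is closed under multiplication and contains the identity 1; (4) if F is a finite set of neutral words and α is a neutral word with ⋃_{β∈F} K(β) = K(α) and K(α) ∈ {K(β) : β ∈ F}, then ẇ_α = ∑_{∅≠A⊆F} (−1)^{|A|+1} ∏_{β∈A} ẇ_β. -/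
namespace PaperToeplitz

open scoped Classical

/-- For a map `w : P → B` and a word `α = (p₁, …, p_{2k})`,
`ẇ_α := w_{p₁}* w_{p₂} ⋯ w_{p_{2k-1}}* w_{p_{2k}}` (the empty word giving `1`). -/
def dotW {G : Type*} [Group G] {P : Submonoid G} {B : Type*} [Monoid B] [StarMul B]
    (w : P → B) (α : Word P) : B :=
  (α.map fun x => star (w x.1) * w x.2).prod

end PaperToeplitz

/-!
Everything is read off from (T3) by computing constructible ideals: for neutral words
`K(αβ) = K(α) ∩ K(β)` and `K(α̃) = K(α)`, while the words `(p, p)` and `(pq, p, e, q)` have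
`K = P = K(∅)`. Hence `w_p* w_p = 1` and `w_{pq}* w_p w_q = 1`; in a C*-algebra the latter forces
`w_p w_q = w_{pq}`, since both are isometries and so `(w_p w_q - w_{pq})*(w_p w_q - w_{pq}) = 0`.
For inclusion–exclusion, work in the commutative algebra generated by the projections `ẇ_β`:
there `∏_{β ∈ F} (1 - ẇ_β) = 1 - ẇ_α`, because `ẇ_α` is one of the `ẇ_β` and `ẇ_α ẇ_β = ẇ_β`
for all of them, and expanding the product gives the formula.
-/

section PrefixProducts

variable {G : Type*} [Group G]

def prefixProds (l : List G) : Set G := {g | ∃ n : ℕ, (l.take n).prod = g}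

theorem one_mem_prefixProds (l : List G) : 1 ∈ prefixProds l := ⟨0, by simp⟩

theorem prefixProds_append {l₁ : List G} (h : l₁.prod = 1) (l₂ : List G) :
    prefixProds (l₁ ++ l₂) = prefixProds l₁ ∪ prefixProds l₂ := by
  ext g
  constructor
  · rintro ⟨n, rfl⟩
    rw [List.take_append, List.prod_append]
    rcases le_or_gt n l₁.length with hn | hn
    · left
      exact ⟨n, by rw [Nat.sub_eq_zero_of_le hn, List.take_zero, List.prod_nil, mul_one]⟩
    · right
      exact ⟨n - l₁.length, by rw [List.take_of_length_le hn.le, h, one_mul]⟩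
  · rintro (⟨n, rfl⟩ | ⟨n, rfl⟩)
    · rcases le_or_gt n l₁.length with hn | hn
      · exact ⟨n, by rw [List.take_append, Nat.sub_eq_zero_of_le hn, List.take_zero,
          List.append_nil]⟩
      · rw [List.take_of_length_le hn.le, h]
        exact one_mem_prefixProds _
    · refine ⟨l₁.length + n, ?_⟩
      rw [List.take_append, List.prod_append, List.take_of_length_le (by omega), h, one_mul,
        Nat.add_sub_cancel_left]

theorem prod_take_reverse_map_inv {l : List G} (h : l.prod = 1) (n : ℕ) :
    ((l.reverse.map (·⁻¹)).take n).prod = (l.take (l.length - n)).prod := by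
  have hsplit : (l.take (l.length - n)).prod * (l.drop (l.length - n)).prod = 1 := by
    rw [← List.prod_append, List.take_append_drop, h]
  rw [← List.map_take, List.take_reverse, List.map_reverse, ← List.prod_inv_reverse,
    inv_eq_of_mul_eq_one_left hsplit]

theorem prefixProds_reverse_map_inv {l : List G} (h : l.prod = 1) :
    prefixProds (l.reverse.map (·⁻¹)) = prefixProds l := by
  ext g
  constructor
  · rintro ⟨n, rfl⟩
    exact ⟨l.length - n, (prod_take_reverse_map_inv h n).symm⟩
  · rintro ⟨m, rfl⟩
    rcases le_or_gt m l.length with hm | hm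
    · exact ⟨l.length - m, by rw [prod_take_reverse_map_inv h, Nat.sub_sub_self hm]⟩
    · rw [List.take_of_length_le hm.le, h]
      exact one_mem_prefixProds _

end PrefixProducts

section InclusionExclusion

open Finset

variable {ι : Type*} [DecidableEq ι]

theorem eq_sum_neg_one_pow_mul_prod_of_mul_eq {R : Type*} [CommRing R] (e : ι → R)
    {F : Finset ι} {i₀ : ι} (hi₀ : i₀ ∈ F) (habs : ∀ i ∈ F, e i₀ * e i = e i) :
    e i₀ = ∑ A ∈ F.powerset.erase ∅, (-1) ^ (#A + 1) * ∏ i ∈ A, e i := by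
  have hexpand : ∏ i ∈ F, (1 - e i) = ∑ A ∈ F.powerset, (-1) ^ #A * ∏ i ∈ A, e i := by
    simp only [sub_eq_add_neg, prod_one_add, prod_neg]
  have habsorb : (1 - e i₀) * ∏ i ∈ F.erase i₀, (1 - e i) = 1 - e i₀ := by
    refine prod_induction _ (fun y => (1 - e i₀) * y = 1 - e i₀) (fun a b ha hb => ?_)
      (mul_one _) fun i hi => ?_
    · rw [← mul_assoc, ha, hb]
    · rw [mul_sub, mul_one, sub_mul, one_mul, habs i (mem_of_mem_erase hi), sub_self, sub_zero]
  rw [mul_prod_erase F (fun i => 1 - e i) hi₀, hexpand,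
    ← add_sum_erase _ _ (empty_mem_powerset F)] at habsorb
  simp only [card_empty, pow_zero, prod_empty, mul_one] at habsorb
  simp only [pow_succ, mul_neg_one, neg_mul, sum_neg_distrib]
  linear_combination habsorb

open scoped IsMulCommutative in
theorem eq_sum_neg_one_pow_smul_prod_of_commute {R B : Type*} [CommRing R] [Ring B] [Algebra R B]
    (f : ι → B) {F : Finset ι} (hcomm : ∀ i ∈ F, ∀ j ∈ F, Commute (f i) (f j))
    {i₀ : ι} (hi₀ : i₀ ∈ F) (habs : ∀ i ∈ F, f i₀ * f i = f i) :
    f i₀ = ∑ A ∈ F.powerset.erase ∅, (-1 : R) ^ (#A + 1) • (A.toList.map f).prod := by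
  let S := Algebra.adjoin R (f '' F)
  have : IsMulCommutative S := Algebra.isMulCommutative_adjoin R <| by
    rintro _ ⟨i, hi, rfl⟩ _ ⟨j, hj, rfl⟩
    exact hcomm i hi j hj
  let e : ι → S := fun i => if hi : i ∈ F then ⟨f i, Algebra.subset_adjoin ⟨i, hi, rfl⟩⟩ else 0
  have he : ∀ i ∈ F, (e i : B) = f i := fun i hi => by simp [e, hi]
  have key := congrArg S.val <| eq_sum_neg_one_pow_mul_prod_of_mul_eq e hi₀ fun i hi =>
    Subtype.ext <| by rw [MulMemClass.coe_mul, he i hi, he i₀ hi₀, habs i hi]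
  rw [Subalgebra.coe_val, he i₀ hi₀] at key
  rw [key]
  push_cast
  refine sum_congr rfl fun A hA => ?_
  have hAF : A ⊆ F := mem_powerset.mp (mem_of_mem_erase hA)
  rw [Algebra.smul_def, map_pow, map_neg, map_one, ← prod_map_toList, ← Subalgebra.val_apply,
    map_list_prod, List.map_map]
  congr 2
  exact List.map_congr_left fun i hi => he i (hAF (mem_toList.mp hi))

end InclusionExclusion

theorem eq_of_star_mul_self_eq_one_of_star_mul_eq_one {A : Type*} [NormedRing A] [StarRing A]
    [CStarRing A] {u v : A} (hu : star u * u = 1) (hv : star v * v = 1) (huv : star u * v = 1) :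
    u = v := by
  have hvu : star v * u = 1 := by simpa using congrArg star huv
  have hzero : star (u - v) * (u - v) = 0 := by
    rw [star_sub, sub_mul, mul_sub, mul_sub, hu, hv, huv, hvu, sub_self]
  exact sub_eq_zero.mp ((CStarRing.star_mul_self_eq_zero_iff _).mp hzero)

namespace PaperToeplitz

section Words

variable {G : Type*} [Group G] {P : Submonoid G}

def quotientList (α : Word P) : List G := α.reverse.map fun x => (x.2 : G)⁻¹ * x.1

theorem Qset_eq_prefixProds (α : Word P) : Qset α = prefixProds (quotientList α) := rfl

theorem quotientList_append (α β : Word P) :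
    quotientList (α ++ β) = quotientList β ++ quotientList α := by
  simp [quotientList]

theorem prod_quotientList (α : Word P) : (quotientList α).prod = (dotProd α)⁻¹ := by
  simp [quotientList, dotProd, List.prod_inv_reverse, Function.comp_def]

theorem quotientList_rev (α : Word P) :
    quotientList (rev α) = (quotientList α).reverse.map (·⁻¹) := by
  simp [quotientList, rev, Function.comp_def]

theorem dotProd_append (α β : Word P) : dotProd (α ++ β) = dotProd α * dotProd β := by
  simp [dotProd]

theorem dotProd_rev (α : Word P) : dotProd (rev α) = (dotProd α)⁻¹ := by
  simp [dotProd, rev, List.prod_inv_reverse, Function.comp_def]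

theorem Qset_append {β : Word P} (hβ : dotProd β = 1) (α : Word P) :
    Qset (α ++ β) = Qset β ∪ Qset α := by
  rw [Qset_eq_prefixProds, quotientList_append,
    prefixProds_append (by rw [prod_quotientList, hβ, inv_one])]
  rfl

theorem Qset_rev {α : Word P} (hα : dotProd α = 1) : Qset (rev α) = Qset α := by
  rw [Qset_eq_prefixProds, quotientList_rev,
    prefixProds_reverse_map_inv (by rw [prod_quotientList, hα, inv_one])]
  rfl

theorem Kset_append {β : Word P} (hβ : dotProd β = 1) (α : Word P) :
    Kset (α ++ β) = Kset β ∩ Kset α := by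
  rw [Kset, Qset_append hβ, Set.biInter_union]
  rfl

theorem Kset_rev {α : Word P} (hα : dotProd α = 1) : Kset (rev α) = Kset α := by
  rw [Kset, Qset_rev hα]
  rfl

theorem Kset_eq_of_forall_inv_mem {α : Word P} (h : ∀ g ∈ Qset α, g⁻¹ ∈ P) :
    Kset α = P := by
  ext y
  simp only [Kset, lcos, Set.mem_iInter, Set.mem_ofPred_eq, SetLike.mem_coe]
  refine ⟨fun hy => by simpa using hy 1 (one_mem_prefixProds _), fun hy g hg => ?_⟩
  exact P.mul_mem (h g hg) hy

theorem Kset_nil : Kset ([] : Word P) = P :=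
  Kset_eq_of_forall_inv_mem <| by rintro g ⟨n, rfl⟩; simp

variable {B : Type*} [Monoid B] [StarMul B]

theorem dotW_append (w : P → B) (α β : Word P) : dotW w (α ++ β) = dotW w α * dotW w β := by
  simp [dotW]

theorem star_dotW (w : P → B) (α : Word P) : star (dotW w α) = dotW w (rev α) := by
  induction α with
  | nil => simp [dotW, rev]
  | cons x α ih => simp_all [dotW, rev, star_mul]

end Words

section KsetDetermined

variable {G : Type*} [Group G] {P : Submonoid G} {B : Type*}

/-- Condition (T3). -/
def KsetDetermined [Monoid B] [StarMul B] (w : P → B) : Prop :=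
  ∀ α β : Word P, dotProd α = 1 → dotProd β = 1 → Kset α = Kset β → dotW w α = dotW w β

section Monoid

variable [Monoid B] [StarMul B] {w : P → B}

theorem KsetDetermined.isSelfAdjoint_dotW (hw : KsetDetermined w) {α : Word P}
    (hα : dotProd α = 1) : IsSelfAdjoint (dotW w α) :=
  (star_dotW w α).trans <| hw _ _ (by rw [dotProd_rev, hα, inv_one]) hα (Kset_rev hα)

theorem KsetDetermined.dotW_mul_dotW_of_Kset_subset (hw : KsetDetermined w) {α β : Word P}
    (hα : dotProd α = 1) (hβ : dotProd β = 1) (h : Kset β ⊆ Kset α) :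
    dotW w α * dotW w β = dotW w β := by
  rw [← dotW_append]
  exact hw _ _ (by rw [dotProd_append, hα, hβ, one_mul]) hβ
    (by rw [Kset_append hβ, Set.inter_eq_left.mpr h])

theorem KsetDetermined.commute_dotW (hw : KsetDetermined w) {α β : Word P}
    (hα : dotProd α = 1) (hβ : dotProd β = 1) : Commute (dotW w α) (dotW w β) := by
  rw [Commute, SemiconjBy, ← dotW_append, ← dotW_append]
  exact hw _ _ (by rw [dotProd_append, hα, hβ, one_mul]) (by rw [dotProd_append, hα, hβ, one_mul])
    (by rw [Kset_append hβ, Kset_append hα, Set.inter_comm])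

theorem KsetDetermined.star_mul_self (hw : KsetDetermined w) (p : P) : star (w p) * w p = 1 := by
  have hK : Kset [(p, p)] = P := Kset_eq_of_forall_inv_mem <| by
    rintro g ⟨_ | n, rfl⟩ <;> simp
  simpa [dotW] using hw [(p, p)] [] (by simp [dotProd]) rfl (hK.trans Kset_nil.symm)

end Monoid

theorem KsetDetermined.mul_eq [NormedRing B] [StarRing B] [CStarRing B] {w : P → B}
    (hw : KsetDetermined w) (hw₁ : w 1 = 1) (p q : P) : w p * w q = w (p * q) := by
  have hK : Kset [(p * q, p), (1, q)] = P := Kset_eq_of_forall_inv_mem <| by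
    rintro g ⟨_ | _ | n, rfl⟩ <;> simp
  have hpq : star (w (p * q)) * (w p * w q) = 1 := by
    simpa [dotW, hw₁, mul_assoc] using
      hw [(p * q, p), (1, q)] [] (by simp [dotProd]) rfl (hK.trans Kset_nil.symm)
  have hisom : star (w p * w q) * (w p * w q) = 1 := by
    rw [star_mul, mul_assoc, ← mul_assoc (star (w p)), hw.star_mul_self, one_mul,
      hw.star_mul_self]
  exact (eq_of_star_mul_self_eq_one_of_star_mul_eq_one (hw.star_mul_self _) hisom hpq).symm

end KsetDetermined

open scoped Classical

theorem statement6_general {G : Type*} [Group G] (P : Submonoid G)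
    {B : Type*} [CStarAlgebra B] (w : P → B)
    (hT1 : w 1 = 1)
    (hT3 : ∀ α β : Word P, dotProd α = 1 → dotProd β = 1 → Kset α = Kset β →
      dotW w α = dotW w β) :
    (∀ p : P, star (w p) * w p = 1) ∧
    (∀ p q : P, w p * w q = w (p * q)) ∧
    ((∀ α : Word P, dotProd α = 1 →
        IsSelfAdjoint (dotW w α) ∧ dotW w α * dotW w α = dotW w α) ∧
      (∀ α β : Word P, dotProd α = 1 → dotProd β = 1 →
        Commute (dotW w α) (dotW w β)) ∧
      (∀ α β : Word P, dotProd α = 1 → dotProd β = 1 →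
        ∃ γ : Word P, dotProd γ = 1 ∧ dotW w γ = dotW w α * dotW w β) ∧
      (∃ γ : Word P, dotProd γ = 1 ∧ dotW w γ = 1)) ∧
    (∀ (F : Finset (Word P)) (α : Word P), (∀ β ∈ F, dotProd β = 1) → dotProd α = 1 →
      (⋃ β ∈ F, Kset β) = Kset α → (∃ β ∈ F, Kset β = Kset α) →
      dotW w α = ∑ A ∈ F.powerset.erase ∅,
        ((-1 : ℂ)) ^ (A.card + 1) • (A.toList.map (dotW w)).prod) := by
  have hw : KsetDetermined w := hT3
  refine ⟨hw.star_mul_self, hw.mul_eq hT1,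
    ⟨fun α hα => ⟨hw.isSelfAdjoint_dotW hα, hw.dotW_mul_dotW_of_Kset_subset hα hα le_rfl⟩,
      fun α β hα hβ => hw.commute_dotW hα hβ,
      fun α β hα hβ => ⟨α ++ β, by rw [dotProd_append, hα, hβ, one_mul], dotW_append w α β⟩,
      ⟨[], rfl, rfl⟩⟩, ?_⟩
  rintro F α hF hα hU ⟨β₀, hβ₀, hKβ₀⟩
  rw [← hw β₀ α (hF β₀ hβ₀) hα hKβ₀]
  refine eq_sum_neg_one_pow_smul_prod_of_commute (dotW w)
    (fun β hβ γ hγ => hw.commute_dotW (hF β hβ) (hF γ hγ)) hβ₀ fun β hβ => ?_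
  refine hw.dotW_mul_dotW_of_Kset_subset (hF β₀ hβ₀) (hF β hβ) ?_
  rw [hKβ₀, ← hU]
  exact Set.subset_biUnion_of_mem hβ

/-- If `w : P → B` is a map into a unital C*-algebra satisfying (T1) `w_e = 1`,
(T2) `ẇ_α = 0` for neutral `α` with `K(α) = ∅`, and (T3) `ẇ_α = ẇ_β` for neutral words with
`K(α) = K(β)`, then: (1) each `w_p` is an isometry; (2) `w` is multiplicative;
(3) the `ẇ_α`, `α` neutral, form a commuting family of self-adjoint projections closed
under multiplication and containing `1`; and (4) the inclusion-exclusion identity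
`ẇ_α = ∑_{∅≠A⊆F} (−1)^{|A|+1} ∏_{β∈A} ẇ_β` holds whenever `F` is a finite set of neutral
words with `⋃_{β∈F} K(β) = K(α)` for a neutral word `α` with `K(α) ∈ {K(β) : β ∈ F}`. -/
theorem statement6 {G : Type*} [Group G] (P : Submonoid G)
    {B : Type*} [CStarAlgebra B] (w : P → B)
    (hT1 : w 1 = 1)
    (hT2 : ∀ α : Word P, dotProd α = 1 → Kset α = (∅ : Set G) → dotW w α = 0)
    (hT3 : ∀ α β : Word P, dotProd α = 1 → dotProd β = 1 → Kset α = Kset β →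
      dotW w α = dotW w β) :
    (∀ p : P, star (w p) * w p = 1) ∧
    (∀ p q : P, w p * w q = w (p * q)) ∧
    ((∀ α : Word P, dotProd α = 1 →
        IsSelfAdjoint (dotW w α) ∧ dotW w α * dotW w α = dotW w α) ∧
      (∀ α β : Word P, dotProd α = 1 → dotProd β = 1 →
        Commute (dotW w α) (dotW w β)) ∧
      (∀ α β : Word P, dotProd α = 1 → dotProd β = 1 →
        ∃ γ : Word P, dotProd γ = 1 ∧ dotW w γ = dotW w α * dotW w β) ∧
      (∃ γ : Word P, dotProd γ = 1 ∧ dotW w γ = 1)) ∧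
    (∀ (F : Finset (Word P)) (α : Word P), (∀ β ∈ F, dotProd β = 1) → dotProd α = 1 →
      (⋃ β ∈ F, Kset β) = Kset α → (∃ β ∈ F, Kset β = Kset α) →
      dotW w α = ∑ A ∈ F.powerset.erase ∅,
        ((-1 : ℂ)) ^ (A.card + 1) • (A.toList.map (dotW w)).prod) :=
  statement6_general P w hT1 hT3

end PaperToeplitz
end

section
/- Let P be a submonoid of a group G, and let G₀ := {g ∈ G : gP ∩ S ≠ ∅ and g⁻¹P ∩ S ≠ ∅ for every nonempty constructible right ideal S of P}. Then the following are equivalent: (1) for every g ∈ G₀ with g ≠ e and every p ∈ P, there exists q ∈ pP with qP ∩ gqP = ∅; (2) for all p, t ∈ P with p ≠ t, there exists s ∈ P such that psP ∩ tsP = ∅. -/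
namespace PaperToeplitz

/-- The subgroup-like subset
`G₀ := {g ∈ G : gP ∩ S ≠ ∅ and g⁻¹P ∩ S ≠ ∅ for every nonempty constructible ideal S}`. -/
def Gzero {G : Type*} [Group G] (P : Submonoid G) : Set G :=
  {g : G | ∀ S ∈ CIdeals P, S.Nonempty →
    (lcos P g ∩ S).Nonempty ∧ (lcos P g⁻¹ ∩ S).Nonempty}

/-!
Both conditions are the same statement under the substitution `g = p⁻¹t`, because
`psP ∩ tsP = p(sP ∩ gsP)`. The only work is to match the ranges of `g`: if `psP ∩ tsP` is never
empty then `p⁻¹t ∈ G₀`, since each constructible ideal `S` is a right ideal; conversely, for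
`g ∈ G₀ ∖ {e}` the constructible ideal `pP` contains some `c` with `gc ∈ P`, and `(2)` applied to
`c ≠ gc` gives `q = cs`.
-/

section

open scoped Pointwise

variable {G : Type*} [Group G] {P : Submonoid G}

theorem mem_lcos {x y : G} : y ∈ lcos P x ↔ x⁻¹ * y ∈ P := Iff.rfl

@[simp]
theorem mem_lcos_one {y : G} : y ∈ lcos P 1 ↔ y ∈ P := by
  rw [mem_lcos, inv_one, one_mul]

@[simp]
theorem lcos_one : lcos P 1 = P := Set.ext fun _ => mem_lcos_one

theorem self_mem_lcos (x : G) : x ∈ lcos P x := by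
  rw [mem_lcos, inv_mul_cancel]
  exact P.one_mem

theorem mul_mem_lcos {x y b : G} (hy : y ∈ lcos P x) (hb : b ∈ P) : y * b ∈ lcos P x := by
  rw [mem_lcos, ← mul_assoc]
  exact P.mul_mem hy hb

theorem lcos_mul (a x : G) : lcos P (a * x) = a • lcos P x := by
  ext y
  simp [Set.mem_smul_set_iff_inv_smul_mem, mem_lcos, mul_assoc]

theorem lcos_mul_subset {a b : G} (hb : b ∈ P) : lcos P (a * b) ⊆ lcos P a := by
  intro y hy
  rw [lcos_mul, Set.mem_smul_set_iff_inv_smul_mem, smul_eq_mul] at hy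
  simpa [mem_lcos, mul_assoc] using P.mul_mem hb hy

theorem lcos_subset_of_mem {x : G} (hx : x ∈ P) : lcos P x ⊆ P := by
  simpa using lcos_mul_subset (a := 1) hx

theorem inter_lcos_mul_nonempty_iff (p t s : G) :
    (lcos P (p * s) ∩ lcos P (t * s)).Nonempty ↔
      (lcos P s ∩ lcos P (p⁻¹ * t * s)).Nonempty := by
  rw [show t * s = p * (p⁻¹ * t * s) by group, lcos_mul p, lcos_mul p, ← Set.smul_set_inter,
    Set.smul_set_nonempty]

theorem one_mem_Qset (α : Word P) : (1 : G) ∈ Qset α := ⟨0, rfl⟩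

theorem Kset_subset (α : Word P) : Kset α ⊆ P := fun _ hu =>
  mem_lcos_one.1 (Set.mem_iInter₂.1 hu 1 (one_mem_Qset α))

theorem lcos_subset_Kset {α : Word P} {u : G} (hu : u ∈ Kset α) : lcos P u ⊆ Kset α := by
  intro y hy
  have hy' : y = u * (u⁻¹ * y) := by group
  rw [hy']
  exact Set.mem_iInter₂.2 fun g hg => mul_mem_lcos (Set.mem_iInter₂.1 hu g hg) hy

theorem Qset_singleton (p : P) : Qset ([(p, 1)] : Word P) = {1, (p : G)} := by
  ext g
  constructor
  · rintro ⟨_ | n, rfl⟩ <;> simp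
  · rintro (rfl | rfl)
    · exact one_mem_Qset _
    · exact ⟨1, by simp⟩

theorem lcos_mem_CIdeals (p : P) : lcos P (p : G) ∈ CIdeals P := by
  refine ⟨[(p, 1)], ?_⟩
  simp only [Kset, Qset_singleton, Set.mem_insert_iff, Set.mem_singleton_iff,
    Set.iInter_iInter_eq_or_left, Set.iInter_iInter_eq_left]
  exact Set.inter_eq_right.2 fun y hy => mem_lcos_one.2 (lcos_subset_of_mem p.2 hy)

/-- For `u ∈ S`, a common element of `uP ∩ guP` lies in `gP ∩ S`, and its `g⁻¹`-translate
in `g⁻¹P ∩ S`. -/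
theorem inv_mul_mem_Gzero {p t : G}
    (h : ∀ s : P, (lcos P (p * s) ∩ lcos P (t * s)).Nonempty) : p⁻¹ * t ∈ Gzero P := by
  rintro S ⟨α, rfl⟩ ⟨u, hu⟩
  have huP : u ∈ P := Kset_subset α hu
  obtain ⟨w, hwu, hwgu⟩ := (inter_lcos_mul_nonempty_iff p t u).1 (h ⟨u, huP⟩)
  have hwP : w ∈ P := lcos_subset_of_mem huP hwu
  rw [lcos_mul, Set.mem_smul_set_iff_inv_smul_mem, smul_eq_mul] at hwgu
  refine ⟨⟨w, lcos_mul_subset huP ?_, lcos_subset_Kset hu hwu⟩,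
    ⟨(p⁻¹ * t)⁻¹ * w, ?_, lcos_subset_Kset hu hwgu⟩⟩
  · rwa [lcos_mul, Set.mem_smul_set_iff_inv_smul_mem, smul_eq_mul]
  · rwa [mem_lcos, inv_inv, mul_inv_cancel_left]

end

/-- Equivalence of: (1) for every `g ∈ G₀ ∖ {e}` and every `p ∈ P` there is `q ∈ pP` with
`qP ∩ gqP = ∅`; and (2) for all `p ≠ t` in `P` there is `s ∈ P` with `psP ∩ tsP = ∅`. -/
theorem statement10 {G : Type*} [Group G] (P : Submonoid G) :
    (∀ g ∈ Gzero P, g ≠ 1 → ∀ p : P, ∃ q ∈ lcos P (p : G),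
        lcos P q ∩ lcos P (g * q) = ∅) ↔
    (∀ p t : P, p ≠ t → ∃ s : P,
        lcos P ((p : G) * (s : G)) ∩ lcos P ((t : G) * (s : G)) = ∅) := by
  simp only [← Set.not_nonempty_iff_eq_empty]
  constructor
  · intro h p t hpt
    by_contra! hcon
    have hg1 : (p : G)⁻¹ * t ≠ 1 := fun h1 => hpt (Subtype.ext (inv_mul_eq_one.1 h1))
    obtain ⟨q, hq, hdisj⟩ := h _ (inv_mul_mem_Gzero hcon) hg1 1
    have hqP : q ∈ P := by simpa using hq
    exact hdisj (by simpa [mul_assoc] using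
      (inter_lcos_mul_nonempty_iff (P := P) p t q).1 (hcon ⟨q, hqP⟩))
  · intro h g hg hg1 p
    obtain ⟨-, c, hgc, hpc⟩ := hg _ (lcos_mem_CIdeals p) ⟨p, self_mem_lcos (p : G)⟩
    rw [mem_lcos, inv_inv] at hgc
    have hcP : c ∈ P := lcos_subset_of_mem p.2 hpc
    have hne : (⟨c, hcP⟩ : P) ≠ ⟨g * c, hgc⟩ := fun he =>
      hg1 (mul_eq_right.1 (congrArg Subtype.val he).symm)
    obtain ⟨s, hs⟩ := h _ _ hne
    exact ⟨c * s, mul_mem_lcos hpc s.2, by simpa [mul_assoc] using hs⟩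

end PaperToeplitz
end

section
/- Let R be an integral domain that is not a field, and let P := R ⋊ R^× be its ax+b-monoid: the set R × (R ∖ {0}) with multiplication (b,a)(d,c) = (b + ad, ac). Then for all p, t ∈ P with p ≠ t there exists s ∈ P such that psP ∩ tsP = ∅, where xP := {xy : y ∈ P}. -/
/-!
Every element `x` of `R ⋊ R^×` satisfies `xP ⊆ {z | x.2 ∣ z.1 - x.1}`, so two translates `xP`, `x'P`
whose second coordinates share a divisor `g` are disjoint as soon as `g ∤ x.1 - x'.1`.
For `p ≠ t` pick `s₁` with `m := (p.1 + p.2 s₁) - (t.1 + t.2 s₁) ≠ 0` and a nonzero nonunit `c`;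
then `s = (s₁, m c)` gives `(ps).1 - (ts).1 = m`, which is not divisible by `m c`.
-/

/-- Multiplication in the `ax+b`-monoid `R ⋊ R^×`: `(b,a)(d,c) = (b + ad, ac)`. -/
def axbMul {R : Type*} [CommRing R] (p q : R × R) : R × R :=
  (p.1 + p.2 * q.1, p.2 * q.2)

/-- The right translate `xP = {xy : y ∈ R ⋊ R^×}` of the `ax+b`-monoid by an element `x`. -/
def axbCoset {R : Type*} [CommRing R] (x : R × R) : Set (R × R) :=
  {z | ∃ y : R × R, y.2 ≠ 0 ∧ z = axbMul x y}

section AxbMonoid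

variable {R : Type*} [CommRing R]

theorem dvd_sub_fst_of_mem_axbCoset {x z : R × R} (hz : z ∈ axbCoset x) : x.2 ∣ z.1 - x.1 := by
  obtain ⟨y, -, rfl⟩ := hz
  exact ⟨y.1, by simp [axbMul]⟩

theorem axbCoset_inter_eq_empty_of_not_dvd {x x' : R × R} {g : R} (hx : g ∣ x.2) (hx' : g ∣ x'.2)
    (hg : ¬ g ∣ x.1 - x'.1) : axbCoset x ∩ axbCoset x' = ∅ := by
  refine Set.eq_empty_of_forall_notMem fun z ⟨hz, hz'⟩ => hg ?_
  have h := dvd_sub (hx.trans (dvd_sub_fst_of_mem_axbCoset hz))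
    (hx'.trans (dvd_sub_fst_of_mem_axbCoset hz'))
  rwa [sub_sub_sub_cancel_left, ← neg_sub, dvd_neg] at h

theorem exists_add_mul_ne_add_mul {p t : R × R} (hpt : p ≠ t) :
    ∃ s : R, p.1 + p.2 * s ≠ t.1 + t.2 * s := by
  by_contra! h
  have h₀ := h 0
  have h₁ := h 1
  simp only [mul_zero, add_zero, mul_one] at h₀ h₁
  exact hpt (Prod.ext h₀ (by simpa [h₀] using h₁))

end AxbMonoid

theorem statement13_general {R : Type*} [CommRing R] [IsDomain R] (hnf : ¬ IsField R)
    (p t : R × R) (hpt : p ≠ t) :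
    ∃ s : R × R, s.2 ≠ 0 ∧ axbCoset (axbMul p s) ∩ axbCoset (axbMul t s) = ∅ := by
  obtain ⟨c, hc0, hcu⟩ := Ring.exists_not_isUnit_of_not_isField hnf
  obtain ⟨s₁, hs₁⟩ := exists_add_mul_ne_add_mul hpt
  set m := (p.1 + p.2 * s₁) - (t.1 + t.2 * s₁)
  have hm : m ≠ 0 := sub_ne_zero.2 hs₁
  refine ⟨(s₁, m * c), mul_ne_zero hm hc0,
    axbCoset_inter_eq_empty_of_not_dvd (dvd_mul_left _ p.2) (dvd_mul_left _ t.2) ?_⟩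
  intro hdvd
  change m * c ∣ m at hdvd
  exact hcu (isUnit_iff_dvd_one.2 ((mul_dvd_mul_iff_left hm).1 (by rwa [mul_one])))

/-- If `R` is an integral domain that is not a field and `P = R ⋊ R^×` is its
`ax+b`-monoid, then for all `p ≠ t` in `P` there exists `s ∈ P` with `psP ∩ tsP = ∅`. -/
theorem statement13 {R : Type*} [CommRing R] [IsDomain R] (hnf : ¬ IsField R)
    (p t : R × R) (hp : p.2 ≠ 0) (ht : t.2 ≠ 0) (hpt : p ≠ t) :
    ∃ s : R × R, s.2 ≠ 0 ∧ axbCoset (axbMul p s) ∩ axbCoset (axbMul t s) = ∅ :=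
  statement13_general hnf p t hpt
end

section
/- Let 𝒪 be a nonmaximal order in an algebraic number field K with ring of integers 𝒪_K and conductor 𝔠 := {x ∈ K : x𝒪_K ⊆ 𝒪}. Let m be the least positive integer with m𝒪_K ⊆ 𝒪, and let H ⊆ 𝒪_K be a complete set of representatives for the nontrivial cosets of m𝒪_K in 𝒪_K (so 𝒪_K = m𝒪_K ⊔ ⊔_{h∈H}(h + m𝒪_K)). For h ∈ H let n_h be the least positive integer with n_h𝒪_K ⊆ h𝒪_K and set h' := n_h/h ∈ 𝒪_K; define the fractional 𝒪-ideal I_h := (1/h')·m𝒪 ∩ 𝒪_K if h' ∈ 𝔠, and I_h := (1/h')·𝒪 ∩ 𝒪_K if h' ∉ 𝔠. Then for every h ∈ H one has h + m𝒪_K ⊆ I_h and I_h ⊊ 𝒪_K, and moreover 𝒪_K = ⋃_{h∈H} I_h. -/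
open scoped Classical

/-!
Write `S` for the ring of integers and `h' = n / h`. If `h'` is not in the conductor, then
`h + m y = (h / n) (n + m h' y)` with `n + m h' y ∈ O`, while `I h = S` would force
`h' S ⊆ O`. If `h'` is in the conductor, then `n S = h' (h S) ⊆ O`, so the minimality of `m`
gives `m ∣ n`, say `n = m k`, and `h + m y = (h / n) m (k + h' y)`; now `1 ∈ I h` would give
`k = h y` with `y ∈ O`, hence `k S ⊆ h S` and `n ≤ k < m k = n`. Finally an element of `S`
is either `h + m y` for some `h ∈ H`, or `m y`, which lies in every `I h`.
-/

theorem dvd_of_natCast_mul_mem {R : Type*} [CommRing R] {O : Subring R} {S : Set R} {m k : ℕ}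
    (hm : IsLeast {k : ℕ | 0 < k ∧ ∀ y ∈ S, (k : R) * y ∈ O} m)
    (hk : ∀ y ∈ S, (k : R) * y ∈ O) : m ∣ k := by
  obtain ⟨⟨hm0, hmO⟩, hmin⟩ := hm
  have hgcd : ∀ y ∈ S, ((m.gcd k : ℕ) : R) * y ∈ O := by
    intro y hy
    have hbezout : ((m.gcd k : ℕ) : R) = m * (m.gcdA k : R) + k * (m.gcdB k : R) := by
      simpa using congrArg (Int.cast : ℤ → R) (Nat.gcd_eq_gcd_ab m k)
    rw [hbezout, add_mul, mul_right_comm, mul_right_comm (k : R)]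
    exact O.add_mem (O.mul_mem (hmO y hy) (intCast_mem _ _))
      (O.mul_mem (hk y hy) (intCast_mem _ _))
  have hle : m ≤ m.gcd k := hmin ⟨Nat.gcd_pos_of_pos_left k hm0, hgcd⟩
  rw [← le_antisymm (Nat.le_of_dvd hm0 (Nat.gcd_dvd_left m k)) hle]
  exact Nat.gcd_dvd_right m k

theorem one_lt_of_isLeast {R : Type*} [Ring R] {O S : Subring R} {m : ℕ} (hOS : O < S)
    (hm : IsLeast {k : ℕ | 0 < k ∧ ∀ y ∈ S, (k : R) * y ∈ O} m) : 1 < m := by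
  refine lt_of_le_of_ne hm.1.1 fun h1 => hOS.not_ge fun y hy => ?_
  simpa [← h1] using hm.1.2 y hy

section CosetCover

variable {K : Type*} [Field K] (O S : Subring K)

/-- The paper's `I_h` with `h' = n / h`; the condition of the `if` says that `h'` lies in the
conductor of `O` in `S`. -/
def cosetCover (m n : ℕ) (h : K) : Set K :=
  if ∀ y ∈ S, (n / h : K) * y ∈ O then {x | x ∈ S ∧ ∃ y ∈ O, x = h / n * (m * y)}
  else {x | x ∈ S ∧ ∃ y ∈ O, x = h / n * y}

variable {O S} {m n : ℕ} {h : K}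

theorem cosetCover_subset : cosetCover O S m n h ⊆ S := by
  unfold cosetCover
  split_ifs <;> exact fun x hx => hx.1

theorem natCast_div_mem (h0 : h ≠ 0) (hn : ∀ y ∈ S, ∃ z ∈ S, (n : K) * y = h * z) :
    (n / h : K) ∈ S := by
  obtain ⟨z, hz, hnz⟩ := hn 1 S.one_mem
  rwa [show (n / h : K) = z by rw [div_eq_iff h0]; linear_combination hnz]

theorem dvd_of_div_mul_mem (hm : IsLeast {k : ℕ | 0 < k ∧ ∀ y ∈ S, (k : K) * y ∈ O} m)
    (hh : h ∈ S) (h0 : h ≠ 0) (hc : ∀ y ∈ S, (n / h : K) * y ∈ O) : m ∣ n := by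
  refine dvd_of_natCast_mul_mem hm fun y hy => ?_
  convert hc (h * y) (S.mul_mem hh hy) using 1
  field_simp

variable [CharZero K]

theorem intCast_mul_add_natCast_mul_mem_cosetCover
    (hm : IsLeast {k : ℕ | 0 < k ∧ ∀ y ∈ S, (k : K) * y ∈ O} m) (hh : h ∈ S) (h0 : h ≠ 0)
    (hn0 : 0 < n) (hn : ∀ y ∈ S, ∃ z ∈ S, (n : K) * y = h * z)
    (j : ℤ) {y : K} (hy : y ∈ S) : j * h + m * y ∈ cosetCover O S m n h := by
  have hx : j * h + m * y ∈ S :=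
    S.add_mem (S.mul_mem (intCast_mem _ _) hh) (S.mul_mem (natCast_mem _ _) hy)
  replace hn0 : (n : K) ≠ 0 := Nat.cast_ne_zero.mpr hn0.ne'
  unfold cosetCover
  split_ifs with hc
  · obtain ⟨k, hk⟩ := dvd_of_div_mul_mem hm hh h0 hc
    refine ⟨hx, j * k + n / h * y, O.add_mem (O.mul_mem (intCast_mem _ _) (natCast_mem _ _))
      (hc y hy), ?_⟩
    rw [hk] at hn0 ⊢
    push_cast at hn0 ⊢
    obtain ⟨hm0, hk0⟩ := mul_ne_zero_iff.mp hn0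
    field_simp
  · refine ⟨hx, j * n + m * (n / h * y), O.add_mem (O.mul_mem (intCast_mem _ _)
      (natCast_mem _ _)) (hm.1.2 _ (S.mul_mem (natCast_div_mem h0 hn) hy)), ?_⟩
    field_simp

theorem one_notMem_cosetCover (hOS : O ≤ S) (hm1 : 1 < m)
    (hm : IsLeast {k : ℕ | 0 < k ∧ ∀ y ∈ S, (k : K) * y ∈ O} m) (hh : h ∈ S) (h0 : h ≠ 0)
    (hn : IsLeast {k : ℕ | 0 < k ∧ ∀ y ∈ S, ∃ z ∈ S, (k : K) * y = h * z} n)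
    (hc : ∀ y ∈ S, (n / h : K) * y ∈ O) : (1 : K) ∉ cosetCover O S m n h := by
  rw [cosetCover, if_pos hc]
  rintro ⟨-, y, hy, hy1⟩
  obtain ⟨k, rfl⟩ := dvd_of_div_mul_mem hm hh h0 hc
  have hk0 : 0 < k := Nat.pos_of_mul_pos_left hn.1.1
  have hk : (k : K) = h * y := by
    have : (m : K) ≠ 0 := Nat.cast_ne_zero.mpr (by omega)
    have : (k : K) ≠ 0 := Nat.cast_ne_zero.mpr hk0.ne'
    push_cast at hy1
    field_simp at hy1
    exact hy1
  have hle : m * k ≤ k :=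
    hn.2 ⟨hk0, fun t ht => ⟨y * t, S.mul_mem (hOS hy) ht, by rw [hk]; ring⟩⟩
  nlinarith

theorem cosetCover_ssubset (hOS : O ≤ S) (hm1 : 1 < m)
    (hm : IsLeast {k : ℕ | 0 < k ∧ ∀ y ∈ S, (k : K) * y ∈ O} m) (hh : h ∈ S) (h0 : h ≠ 0)
    (hn : IsLeast {k : ℕ | 0 < k ∧ ∀ y ∈ S, ∃ z ∈ S, (k : K) * y = h * z} n) :
    cosetCover O S m n h ⊂ S := by
  refine cosetCover_subset.ssubset_of_ne fun heq => ?_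
  by_cases hc : ∀ y ∈ S, (n / h : K) * y ∈ O
  · exact one_notMem_cosetCover hOS hm1 hm hh h0 hn hc (heq ▸ S.one_mem)
  · refine hc fun y hy => ?_
    have hy' : y ∈ cosetCover O S m n h := heq ▸ hy
    rw [cosetCover, if_neg hc] at hy'
    obtain ⟨-, w, hw, rfl⟩ := hy'
    have hn0 : (n : K) ≠ 0 := Nat.cast_ne_zero.mpr hn.1.1.ne'
    field_simp
    exact hw

end CosetCover

theorem statement16_general (K : Type*) [Field K] [NumberField K] (O : Subring K)
    (hOsub : ∀ x ∈ O, IsIntegral ℤ x)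
    (hnonmax : (O : Set K) ≠ {x : K | IsIntegral ℤ x})
    (m : ℕ) (hm : 0 < m)
    (hmO : ∀ y : K, IsIntegral ℤ y → (m : K) * y ∈ O)
    (hmmin : ∀ m' : ℕ, 0 < m' → (∀ y : K, IsIntegral ℤ y → (m' : K) * y ∈ O) → m ≤ m')
    (H : Set K)
    (hH1 : ∀ h ∈ H, IsIntegral ℤ h)
    (hH2 : ∀ h ∈ H, ¬ ∃ y : K, IsIntegral ℤ y ∧ h = (m : K) * y)
    (hH3 : ∀ x : K, IsIntegral ℤ x → (¬ ∃ y : K, IsIntegral ℤ y ∧ x = (m : K) * y) →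
      ∃ h ∈ H, ∃ y : K, IsIntegral ℤ y ∧ x - h = (m : K) * y)
    (n : K → ℕ)
    (hn : ∀ h ∈ H, 0 < n h ∧
      ∀ y : K, IsIntegral ℤ y → ∃ z : K, IsIntegral ℤ z ∧ (n h : K) * y = h * z)
    (hnmin : ∀ h ∈ H, ∀ k : ℕ, 0 < k →
      (∀ y : K, IsIntegral ℤ y → ∃ z : K, IsIntegral ℤ z ∧ (k : K) * y = h * z) →
      n h ≤ k)
    (I : K → Set K)
    (hI : ∀ h ∈ H, I h =
      if ∀ y : K, IsIntegral ℤ y → ((n h : K) / h) * y ∈ O then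
        {x : K | IsIntegral ℤ x ∧ ∃ y ∈ O, x = (h / (n h : K)) * ((m : K) * y)}
      else
        {x : K | IsIntegral ℤ x ∧ ∃ y ∈ O, x = (h / (n h : K)) * y}) :
    (∀ h ∈ H, (∀ y : K, IsIntegral ℤ y → h + (m : K) * y ∈ I h) ∧
      I h ⊂ {x : K | IsIntegral ℤ x}) ∧
    {x : K | IsIntegral ℤ x} = ⋃ h ∈ H, I h := by
  let S := (integralClosure ℤ K).toSubring
  have hI : ∀ h ∈ H, I h = cosetCover O S m (n h) h := hI
  have hOS : O < S :=
    lt_of_le_of_ne (fun x hx => hOsub x hx) fun e => hnonmax (congrArg SetLike.coe e)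
  have hmL : IsLeast {k : ℕ | 0 < k ∧ ∀ y ∈ S, (k : K) * y ∈ O} m :=
    ⟨⟨hm, hmO⟩, fun k hk => hmmin k hk.1 hk.2⟩
  have hnL (h) (hh : h ∈ H) :
      IsLeast {k : ℕ | 0 < k ∧ ∀ y ∈ S, ∃ z ∈ S, (k : K) * y = h * z} (n h) :=
    ⟨hn h hh, fun k hk => hnmin h hh k hk.1 hk.2⟩
  have h0 (h) (hh : h ∈ H) : h ≠ 0 := fun h0 => hH2 h hh ⟨0, isIntegral_zero, by simp [h0]⟩
  have hmem (h) (hh : h ∈ H) (j : ℤ) (y) (hy : y ∈ S) : j * h + m * y ∈ I h :=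
    hI h hh ▸ intCast_mul_add_natCast_mul_mem_cosetCover hmL (hH1 h hh) (h0 h hh)
      (hn h hh).1 (hn h hh).2 j hy
  refine ⟨fun h hh => ⟨fun y hy => by simpa using hmem h hh 1 y hy, hI h hh ▸
    cosetCover_ssubset hOS.le (one_lt_of_isLeast hOS hmL) hmL (hH1 h hh) (h0 h hh) (hnL h hh)⟩,
    subset_antisymm (fun x hx => ?_) (Set.iUnion₂_subset fun h hh => hI h hh ▸ cosetCover_subset)⟩
  by_cases hxm : ∃ y : K, IsIntegral ℤ y ∧ x = (m : K) * y
  · obtain ⟨y, hy, rfl⟩ := hxm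
    obtain ⟨x₀, hx₀, hx₀O⟩ := SetLike.exists_of_lt hOS
    obtain ⟨h, hh, -⟩ := hH3 x₀ hx₀ fun ⟨y, hy, e⟩ => hx₀O (e ▸ hmO y hy)
    exact Set.mem_biUnion hh (by simpa using hmem h hh 0 y hy)
  · obtain ⟨h, hh, y, hy, hxy⟩ := hH3 x hx hxm
    rw [sub_eq_iff_eq_add'.mp hxy]
    exact Set.mem_biUnion hh (by simpa using hmem h hh 1 y hy)

/-- Let `𝒪` be a nonmaximal order in a number field `K` with ring of integers
`𝒪_K = {x ∈ K : x integral over ℤ}` and conductor `𝔠 = {c ∈ K : c𝒪_K ⊆ 𝒪}`. Let `m` be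
the least positive integer with `m𝒪_K ⊆ 𝒪` and let `H` be a complete set of
representatives for the nontrivial cosets of `m𝒪_K` in `𝒪_K`. For `h ∈ H`, let `n h` be
the least positive integer with `(n h)𝒪_K ⊆ h𝒪_K`, `h' := n h / h ∈ 𝒪_K`, and set
`I h := (1/h')·m𝒪 ∩ 𝒪_K` if `h' ∈ 𝔠` and `I h := (1/h')·𝒪 ∩ 𝒪_K` otherwise. Then for
every `h ∈ H` one has `h + m𝒪_K ⊆ I h` and `I h ⊊ 𝒪_K`, and `𝒪_K = ⋃_{h∈H} I h`. -/
theorem statement16 (K : Type*) [Field K] [NumberField K] (O : Subring K)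
    (hOsub : ∀ x ∈ O, IsIntegral ℤ x)
    (hfree : Nonempty (Module.Basis (Fin (Module.finrank ℚ K)) ℤ O))
    (hnonmax : (O : Set K) ≠ {x : K | IsIntegral ℤ x})
    (m : ℕ) (hm : 0 < m)
    (hmO : ∀ y : K, IsIntegral ℤ y → (m : K) * y ∈ O)
    (hmmin : ∀ m' : ℕ, 0 < m' → (∀ y : K, IsIntegral ℤ y → (m' : K) * y ∈ O) → m ≤ m')
    (H : Set K)
    (hH1 : ∀ h ∈ H, IsIntegral ℤ h)
    (hH2 : ∀ h ∈ H, ¬ ∃ y : K, IsIntegral ℤ y ∧ h = (m : K) * y)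
    (hH3 : ∀ x : K, IsIntegral ℤ x → (¬ ∃ y : K, IsIntegral ℤ y ∧ x = (m : K) * y) →
      ∃ h ∈ H, ∃ y : K, IsIntegral ℤ y ∧ x - h = (m : K) * y)
    (hH4 : ∀ h₁ ∈ H, ∀ h₂ ∈ H,
      (∃ y : K, IsIntegral ℤ y ∧ h₁ - h₂ = (m : K) * y) → h₁ = h₂)
    (n : K → ℕ)
    (hn : ∀ h ∈ H, 0 < n h ∧
      ∀ y : K, IsIntegral ℤ y → ∃ z : K, IsIntegral ℤ z ∧ (n h : K) * y = h * z)
    (hnmin : ∀ h ∈ H, ∀ k : ℕ, 0 < k →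
      (∀ y : K, IsIntegral ℤ y → ∃ z : K, IsIntegral ℤ z ∧ (k : K) * y = h * z) →
      n h ≤ k)
    (I : K → Set K)
    (hI : ∀ h ∈ H, I h =
      if ∀ y : K, IsIntegral ℤ y → ((n h : K) / h) * y ∈ O then
        {x : K | IsIntegral ℤ x ∧ ∃ y ∈ O, x = (h / (n h : K)) * ((m : K) * y)}
      else
        {x : K | IsIntegral ℤ x ∧ ∃ y ∈ O, x = (h / (n h : K)) * y}) :
    (∀ h ∈ H, (∀ y : K, IsIntegral ℤ y → h + (m : K) * y ∈ I h) ∧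
      I h ⊂ {x : K | IsIntegral ℤ x}) ∧
    {x : K | IsIntegral ℤ x} = ⋃ h ∈ H, I h :=
  statement16_general K O hOsub hnonmax m hm hmO hmmin H hH1 hH2 hH3 n hn hnmin I hI
end

section
/- Let Σ := ℕ ∖ {1} = {0, 2, 3, 4, 5, …}, an additive submonoid of ℤ. Then every nonempty ideal of Σ is a constructible right ideal of Σ, and the set of constructible right ideals of Σ is the disjoint union 𝔍(Σ) = {p + Σ : p ∈ Σ} ⊔ {p + (2 + ℕ) : p ∈ Σ} ⊔ {3 + ℕ}; in particular ∅ ∉ 𝔍(Σ), and every nonempty ideal I ⊆ Σ equals m + Σ or m + ℕ, where m = min I. -/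
/-- The numerical semigroup `Σ = ℕ ∖ {1} = {0, 2, 3, 4, …}` as a subset of `ℤ`. -/
def Sig : Set ℤ := {x : ℤ | x = 0 ∨ 2 ≤ x}

/-- A word `(p₁, …, p_{2k})` in `Σ` (encoded by consecutive pairs) has all entries in `Σ`. -/
def InSig (w : List (ℤ × ℤ)) : Prop := ∀ x ∈ w, x.1 ∈ Sig ∧ x.2 ∈ Sig

/-- The iterated quotient set (in additive notation)
`Q(α) = {0, −p_{2k}+p_{2k-1}, −p_{2k}+p_{2k-1}−p_{2k-2}+p_{2k-3}, …}`. -/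
def SQset (w : List (ℤ × ℤ)) : Set ℤ :=
  {g : ℤ | ∃ n : ℕ, ((w.reverse.map fun x => -x.2 + x.1).take n).sum = g}

/-- The constructible ideal `K(α) = ⋂_{g∈Q(α)} (g + Σ)`. -/
def SKset (w : List (ℤ × ℤ)) : Set ℤ := ⋂ g ∈ SQset w, {x : ℤ | x - g ∈ Sig}

/-- The constructible right ideals of `Σ`. -/
def SCIdeals : Set (Set ℤ) := {S | ∃ w : List (ℤ × ℤ), InSig w ∧ SKset w = S}

/-!
The set `Q(α)` contains `0` and is finite, so it has a largest element `M ≥ 0`. For `g ≤ M` the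
difference `M - g` lies in `Σ` unless `g = M - 1`, hence `M + Σ ⊆ g + Σ` for all other `g`, and
`K(α)` is `M + Σ` if `M - 1 ∉ Q(α)` and `(M + Σ) ∩ (M - 1 + Σ) = M + 2 + ℕ` otherwise.
Conversely, an ideal with least element `m` contains `m + Σ`, so it is `m + Σ` or `m + ℕ`
according to whether it contains `m + 1`, and words of length at most two realise all these sets.
-/

open Set

theorem mem_Sig {x : ℤ} : x ∈ Sig ↔ x = 0 ∨ 2 ≤ x := Iff.rfl

theorem List.finite_range_sum_take {M : Type*} [AddMonoid M] (l : List M) :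
    (Set.range fun n => (l.take n).sum).Finite :=
  (l.inits.finite_toSet.image List.sum).subset <| by
    rintro _ ⟨n, rfl⟩
    exact ⟨_, (List.mem_inits _ _).2 (l.take_prefix n), rfl⟩

theorem zero_mem_SQset (w : List (ℤ × ℤ)) : 0 ∈ SQset w := ⟨0, rfl⟩

theorem exists_isGreatest_SQset (w : List (ℤ × ℤ)) : ∃ M, IsGreatest (SQset w) M :=
  exists_max_image (SQset w) id (List.finite_range_sum_take _) ⟨0, zero_mem_SQset w⟩

theorem mem_SKset {w : List (ℤ × ℤ)} {x : ℤ} : x ∈ SKset w ↔ ∀ g ∈ SQset w, x - g ∈ Sig :=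
  mem_iInter₂

section Intersection

variable {Q : Set ℤ} {M : ℤ}

theorem biInter_shift_eq_ge (hM : IsGreatest Q M) (hpred : M - 1 ∈ Q) :
    ⋂ g ∈ Q, {x : ℤ | x - g ∈ Sig} = {x | M + 2 ≤ x} := by
  ext x
  simp only [mem_iInter₂, mem_ofPred_eq]
  constructor
  · intro hx
    have hM' := hx M hM.1
    have hpred' := hx (M - 1) hpred
    rw [mem_Sig] at hM' hpred'
    omega
  · intro hx g hg
    have := hM.2 hg
    rw [mem_Sig]
    omega

theorem biInter_shift_eq_shift (hM : IsGreatest Q M) (hpred : M - 1 ∉ Q) :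
    ⋂ g ∈ Q, {x : ℤ | x - g ∈ Sig} = {x | x - M ∈ Sig} := by
  ext x
  simp only [mem_iInter₂, mem_ofPred_eq]
  refine ⟨fun hx => hx M hM.1, fun hx g hg => ?_⟩
  have hle := hM.2 hg
  have hne : g ≠ M - 1 := ne_of_mem_of_not_mem hg hpred
  rw [mem_Sig] at hx ⊢
  omega

end Intersection

theorem SKset_cases (w : List (ℤ × ℤ)) :
    (∃ p ∈ Sig, SKset w = {x : ℤ | x - p ∈ Sig}) ∨
    (∃ p ∈ Sig, SKset w = {x : ℤ | p + 2 ≤ x}) ∨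
    SKset w = {x : ℤ | 3 ≤ x} := by
  obtain ⟨M, hM⟩ := exists_isGreatest_SQset w
  have hM0 : 0 ≤ M := hM.2 (zero_mem_SQset w)
  by_cases hpred : M - 1 ∈ SQset w
  · have hK : SKset w = {x | M + 2 ≤ x} := biInter_shift_eq_ge hM hpred
    rcases eq_or_ne M 1 with rfl | hM1
    · exact Or.inr (Or.inr (by rw [hK]; norm_num))
    · exact Or.inr (Or.inl ⟨M, by rw [mem_Sig]; omega, hK⟩)
  · have hM1 : M ≠ 1 := by
      rintro rfl
      exact hpred (zero_mem_SQset w)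
    exact Or.inl ⟨M, by rw [mem_Sig]; omega, biInter_shift_eq_shift hM hpred⟩

theorem SKset_nonempty (w : List (ℤ × ℤ)) : (SKset w).Nonempty := by
  obtain ⟨M, hM⟩ := exists_isGreatest_SQset w
  refine ⟨M + 2, mem_SKset.2 fun g hg => ?_⟩
  have := hM.2 hg
  rw [mem_Sig]
  omega

theorem empty_notMem_SCIdeals : (∅ : Set ℤ) ∉ SCIdeals := by
  rintro ⟨w, -, hw⟩
  exact (SKset_nonempty w).ne_empty hw

theorem SQset_singleton (a b : ℤ) : SQset [(a, b)] = {0, -b + a} := by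
  ext g
  constructor
  · rintro ⟨_ | n, rfl⟩ <;> simp
  · rintro (rfl | rfl)
    exacts [⟨0, rfl⟩, ⟨1, by simp⟩]

theorem SQset_pair (a b c d : ℤ) :
    SQset [(a, b), (c, d)] = {0, -d + c, -d + c + (-b + a)} := by
  ext g
  constructor
  · rintro ⟨_ | _ | n, rfl⟩ <;> simp
  · rintro (rfl | rfl | rfl)
    exacts [⟨0, rfl⟩, ⟨1, by simp⟩, ⟨2, by simp⟩]

theorem mem_SKset_singleton {a b x : ℤ} :
    x ∈ SKset [(a, b)] ↔ x ∈ Sig ∧ x - (-b + a) ∈ Sig := by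
  simp [mem_SKset, SQset_singleton]

theorem mem_SKset_pair {a b c d x : ℤ} :
    x ∈ SKset [(a, b), (c, d)] ↔
      x ∈ Sig ∧ x - (-d + c) ∈ Sig ∧ x - (-d + c + (-b + a)) ∈ Sig := by
  simp [mem_SKset, SQset_pair]

theorem shift_mem_SCIdeals {p : ℤ} (hp : p ∈ Sig) : {x : ℤ | x - p ∈ Sig} ∈ SCIdeals := by
  refine ⟨[(p, 0)], by simpa [InSig, mem_Sig] using hp, ?_⟩
  ext x
  rw [mem_SKset_singleton, mem_ofPred_eq, mem_Sig, mem_Sig, mem_Sig]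
  rw [mem_Sig] at hp
  omega

theorem ge_mem_SCIdeals {m : ℤ} (hm : 2 ≤ m) : {x : ℤ | m ≤ x} ∈ SCIdeals := by
  -- `Q(α)` is `{0, -1}`, `{0, 1}` and `{0, m - 3, m - 2}` for the three words below.
  obtain rfl | rfl | hm4 : m = 2 ∨ m = 3 ∨ 4 ≤ m := by omega
  · refine ⟨[(2, 3)], by simp [InSig, mem_Sig], ?_⟩
    ext x
    simp only [mem_SKset_singleton, mem_ofPred_eq, mem_Sig]
    omega
  · refine ⟨[(3, 2)], by simp [InSig, mem_Sig], ?_⟩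
    ext x
    simp only [mem_SKset_singleton, mem_ofPred_eq, mem_Sig]
    omega
  · refine ⟨[(3, 2), (m - 1, 2)], by simp [InSig, mem_Sig]; omega, ?_⟩
    ext x
    simp only [mem_SKset_pair, mem_ofPred_eq, mem_Sig]
    omega

theorem SCIdeals_eq :
    SCIdeals = ({S | ∃ p ∈ Sig, S = {x : ℤ | x - p ∈ Sig}} ∪
      {S | ∃ p ∈ Sig, S = {x : ℤ | p + 2 ≤ x}} ∪ {S | S = {x : ℤ | 3 ≤ x}}) := by
  ext S
  constructor
  · rintro ⟨w, -, rfl⟩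
    rcases SKset_cases w with h | h | h
    exacts [Or.inl (Or.inl h), Or.inl (Or.inr h), Or.inr h]
  · rintro ((⟨p, hp, rfl⟩ | ⟨p, hp, rfl⟩) | rfl)
    · exact shift_mem_SCIdeals hp
    · exact ge_mem_SCIdeals (by rw [mem_Sig] at hp; omega)
    · exact ge_mem_SCIdeals (by norm_num)

theorem shift_ne_ge (p q : ℤ) : {x : ℤ | x - p ∈ Sig} ≠ {x : ℤ | q + 2 ≤ x} := by
  intro h
  have hp := Set.ext_iff.1 h p
  have hp1 := Set.ext_iff.1 h (p + 1)
  simp only [mem_ofPred_eq, mem_Sig] at hp hp1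
  omega

theorem ge_ne_three_le {p : ℤ} (hp : p ∈ Sig) : {x : ℤ | p + 2 ≤ x} ≠ {x : ℤ | 3 ≤ x} := by
  intro h
  have h3 := Set.ext_iff.1 h 3
  have hp2 := Set.ext_iff.1 h (p + 2)
  simp only [mem_ofPred_eq] at h3 hp2
  rw [mem_Sig] at hp
  omega

theorem exists_min_of_ideal {I : Set ℤ} (hsub : I ⊆ Sig) (hne : I.Nonempty)
    (hadd : ∀ x ∈ I, ∀ s ∈ Sig, x + s ∈ I) :
    ∃ m ∈ I, (∀ x ∈ I, m ≤ x) ∧ (I = {x : ℤ | x - m ∈ Sig} ∨ I = {x : ℤ | m ≤ x}) := by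
  have hbdd : ∃ b, ∀ z ∈ I, b ≤ z := ⟨0, fun z hz => by
    have := hsub hz
    rw [mem_Sig] at this
    omega⟩
  obtain ⟨m, hmI, hmin⟩ := Int.exists_least_of_bdd hbdd hne
  have hshift : {x : ℤ | x - m ∈ Sig} ⊆ I := fun x hx => by
    simpa using hadd m hmI (x - m) hx
  refine ⟨m, hmI, hmin, ?_⟩
  by_cases hm1 : m + 1 ∈ I
  · refine Or.inr (Subset.antisymm hmin fun x (hx : m ≤ x) => ?_)
    rcases eq_or_ne x (m + 1) with rfl | hx1
    · exact hm1
    · exact hshift (by rw [mem_ofPred_eq, mem_Sig]; omega)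
  · refine Or.inl (Subset.antisymm (fun x hx => ?_) hshift)
    have hle := hmin x hx
    have hx1 : x ≠ m + 1 := ne_of_mem_of_not_mem hx hm1
    rw [mem_ofPred_eq, mem_Sig]
    omega

theorem mem_SCIdeals_of_ideal {I : Set ℤ} (hsub : I ⊆ Sig) (hne : I.Nonempty)
    (hadd : ∀ x ∈ I, ∀ s ∈ Sig, x + s ∈ I) : I ∈ SCIdeals := by
  obtain ⟨m, hmI, -, rfl | rfl⟩ := exists_min_of_ideal hsub hne hadd
  · exact shift_mem_SCIdeals (hsub hmI)
  · have hm := hsub hmI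
    have hm1 := hsub (show m ≤ m + 1 by omega)
    rw [mem_Sig] at hm hm1
    exact ge_mem_SCIdeals (by omega)

/-- For `Σ = ℕ ∖ {1}`: every nonempty ideal of `Σ` is a constructible right ideal, and
`𝔍(Σ)` is the disjoint union of `{p + Σ : p ∈ Σ}`, `{p + (2 + ℕ) : p ∈ Σ}` and
`{3 + ℕ}`; in particular `∅ ∉ 𝔍(Σ)`, and every nonempty ideal `I ⊆ Σ` equals `m + Σ` or
`m + ℕ` where `m = min I`. (Here `p + Σ = {x : x − p ∈ Σ}`, `p + (2+ℕ) = {x : p+2 ≤ x}`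
and `3 + ℕ = {x : 3 ≤ x}`.) -/
theorem statement17 :
    (∀ I : Set ℤ, I ⊆ Sig → I.Nonempty → (∀ x ∈ I, ∀ s ∈ Sig, x + s ∈ I) →
      I ∈ SCIdeals) ∧
    SCIdeals = ({S | ∃ p ∈ Sig, S = {x : ℤ | x - p ∈ Sig}} ∪
      {S | ∃ p ∈ Sig, S = {x : ℤ | p + 2 ≤ x}} ∪ {S | S = {x : ℤ | 3 ≤ x}}) ∧
    ({S | ∃ p ∈ Sig, S = {x : ℤ | x - p ∈ Sig}} ∩
      {S | ∃ p ∈ Sig, S = {x : ℤ | p + 2 ≤ x}} = (∅ : Set (Set ℤ))) ∧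
    ({S | ∃ p ∈ Sig, S = {x : ℤ | x - p ∈ Sig}} ∩
      {S | S = {x : ℤ | 3 ≤ x}} = (∅ : Set (Set ℤ))) ∧
    ({S | ∃ p ∈ Sig, S = {x : ℤ | p + 2 ≤ x}} ∩
      {S | S = {x : ℤ | 3 ≤ x}} = (∅ : Set (Set ℤ))) ∧
    (∅ : Set ℤ) ∉ SCIdeals ∧
    (∀ I : Set ℤ, I ⊆ Sig → I.Nonempty → (∀ x ∈ I, ∀ s ∈ Sig, x + s ∈ I) →
      ∃ m ∈ I, (∀ x ∈ I, m ≤ x) ∧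
        (I = {x : ℤ | x - m ∈ Sig} ∨ I = {x : ℤ | m ≤ x})) := by
  refine ⟨fun _ => mem_SCIdeals_of_ideal, SCIdeals_eq, ?_, ?_, ?_, empty_notMem_SCIdeals,
    fun _ => exists_min_of_ideal⟩
  · exact eq_empty_of_forall_notMem fun S ⟨⟨p, _, hp⟩, ⟨q, _, hq⟩⟩ =>
      shift_ne_ge p q (hp.symm.trans hq)
  · exact eq_empty_of_forall_notMem fun S ⟨⟨p, _, hp⟩, (h3 : S = _)⟩ =>
      shift_ne_ge p 1 (hp.symm.trans (h3.trans (by norm_num)))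
  · exact eq_empty_of_forall_notMem fun S ⟨⟨p, hp, hS⟩, (h3 : S = _)⟩ =>
      ge_ne_three_le hp (hS.symm.trans h3)
end

section
/- Let Σ := ℕ ∖ {1} and suppose independence fails at a constructible ideal S of Σ, in the sense that S = ⋃_{R∈𝒞} R for a finite family 𝒞 of constructible ideals of Σ with S ∉ 𝒞. Let m = min S. Then: (1) if m ≠ 3, then S = p + (2 + ℕ) where p := m − 2 ∈ Σ, and there exist R₁, R₂ ∈ 𝒞 with R₁ = p + (2 + Σ) and R₂ ⊇ p + (3 + Σ), and moreover p + (2 + ℕ) = S = R₁ ∪ R₂ = (p + (2 + Σ)) ∪ (p + (3 + Σ)); (2) if m = 3, then S = 3 + ℕ and there exist R₁, R₂ ∈ 𝒞 with R₁ = 3 + Σ and R₂ ⊇ 4 + Σ, and moreover 3 + ℕ = S = R₁ ∪ R₂ = (3 + Σ) ∪ (4 + Σ). -/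
lemma sig_class (w : List (ℤ × ℤ)) :
    ∃ μ : ℤ, μ ∈ Sig ∧
      (SKset w = {x : ℤ | x - μ ∈ Sig} ∨ (2 ≤ μ ∧ SKset w = {x : ℤ | μ ≤ x})) := by
  set l : List ℤ := w.reverse.map fun x => -x.2 + x.1 with hl
  set g : ℕ → ℤ := fun n => (l.take n).sum with hg
  set F : Finset ℤ := (Finset.range (l.length + 1)).image g with hF
  have h0F : (0 : ℤ) ∈ F := by
    rw [hF, Finset.mem_image]
    exact ⟨0, Finset.mem_range.2 (Nat.succ_pos _), by simp [hg]⟩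
  have hQ : SQset w = ↑F := by
    ext q
    constructor
    · rintro ⟨n, hn⟩
      rcases le_or_gt n l.length with h | h
      · rw [hF]
        exact Finset.mem_coe.2 (Finset.mem_image.2 ⟨n, Finset.mem_range.2 (by omega), hn⟩)
      · rw [hF]
        refine Finset.mem_coe.2 (Finset.mem_image.2 ⟨l.length, Finset.mem_range.2 (by omega), ?_⟩)
        show (l.take l.length).sum = q
        rw [List.take_length, ← List.take_of_length_le (l := l) (by omega : l.length ≤ n)]
        exact hn
    · intro hq
      rcases Finset.mem_image.1 (Finset.mem_coe.1 hq) with ⟨n, _, hn⟩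
      exact ⟨n, hn⟩
  have hFne : F.Nonempty := ⟨0, h0F⟩
  set M : ℤ := F.max' hFne with hM
  have hMF : M ∈ F := F.max'_mem hFne
  have hle : ∀ q ∈ F, q ≤ M := fun q hq => F.le_max' q hq
  have hM0 : (0 : ℤ) ≤ M := hle 0 h0F
  have hmem : ∀ x : ℤ, x ∈ SKset w ↔ ∀ q ∈ F, x - q ∈ Sig := by
    intro x
    rw [SKset, Set.mem_iInter₂]
    constructor
    · intro h q hq
      exact h q (by rw [hQ]; exact hq)
    · intro h q hq
      exact h q (by rwa [hQ] at hq)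
  by_cases hM1 : (M - 1) ∈ F
  · refine ⟨M + 2, Or.inr (by omega), Or.inr ⟨by omega, ?_⟩⟩
    ext x
    rw [hmem, Set.mem_setOf_eq]
    constructor
    · intro h
      have h1 := h M hMF
      have h2 := h (M - 1) hM1
      simp only [Sig, Set.mem_setOf_eq] at h1 h2
      omega
    · intro h q hq
      have := hle q hq
      simp only [Sig, Set.mem_setOf_eq]
      omega
  · have hSK : SKset w = {x : ℤ | x - M ∈ Sig} := by
      ext x
      rw [hmem, Set.mem_setOf_eq]
      constructor
      · intro h
        exact h M hMF
      · intro h q hq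
        have h1 := hle q hq
        have h2 : q ≠ M - 1 := fun hc => hM1 (hc ▸ hq)
        simp only [Sig, Set.mem_setOf_eq] at h ⊢
        omega
    have hMmem : M ∈ SKset w := by
      rw [hSK]
      simp [Sig]
    rw [hmem] at hMmem
    have := hMmem 0 h0F
    simp only [sub_zero] at this
    exact ⟨M, this, Or.inl hSK⟩

lemma sig_class' {S : Set ℤ} (hS : S ∈ SCIdeals) :
    ∃ μ : ℤ, μ ∈ Sig ∧
      (S = {x : ℤ | x - μ ∈ Sig} ∨ (2 ≤ μ ∧ S = {x : ℤ | μ ≤ x})) := by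
  obtain ⟨w, -, hw⟩ := hS
  exact hw ▸ sig_class w

lemma cover_lemma (S : Set ℤ) (C : Finset (Set ℤ)) (hC : ∀ R ∈ C, R ∈ SCIdeals)
    (hSC : S ∉ C) (hcover : S = ⋃ R ∈ C, R) (m : ℤ) (hS2 : S = {x : ℤ | m ≤ x}) :
    ∃ R₁ ∈ C, ∃ R₂ ∈ C,
      R₁ = {x : ℤ | x - m ∈ Sig} ∧ {x : ℤ | x - (m + 1) ∈ Sig} ⊆ R₂ ∧
      S = R₁ ∪ R₂ ∧
      R₁ ∪ R₂ = {x : ℤ | x - m ∈ Sig} ∪ {x : ℤ | x - (m + 1) ∈ Sig} := by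
  have hmS : m ∈ S := by rw [hS2]; exact le_refl m
  have hm1S : m + 1 ∈ S := by rw [hS2]; simp only [Set.mem_setOf_eq]; omega
  -- find R₁
  have hmU : m ∈ ⋃ R ∈ C, R := hcover ▸ hmS
  rcases Set.mem_iUnion₂.1 hmU with ⟨R₁, hR₁C, hmR₁⟩
  have hR₁S : R₁ ⊆ S := by
    rw [hcover]; intro x hx; exact Set.mem_biUnion hR₁C hx
  obtain ⟨μ₁, hμ₁Sig, hform₁⟩ := sig_class' (hC R₁ hR₁C)
  have hR₁ : R₁ = {x : ℤ | x - m ∈ Sig} := by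
    have hμ₁R : μ₁ ∈ R₁ := by
      rcases hform₁ with h | ⟨-, h⟩ <;> rw [h] <;> simp [Sig]
    have hmμ₁ : m ≤ μ₁ := by
      have := hR₁S hμ₁R; rw [hS2] at this; exact this
    rcases hform₁ with h | ⟨-, h⟩
    · have : m - μ₁ ∈ Sig := by rw [h] at hmR₁; exact hmR₁
      simp only [Sig, Set.mem_setOf_eq] at this
      have : μ₁ = m := by omega
      rw [h, this]
    · have : μ₁ ≤ m := by rw [h] at hmR₁; exact hmR₁
      have hμm : μ₁ = m := le_antisymm this hmμ₁
      exfalso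
      exact hSC (by rwa [h, hμm, ← hS2] at hR₁C)
  -- find R₂
  have hm1U : m + 1 ∈ ⋃ R ∈ C, R := hcover ▸ hm1S
  rcases Set.mem_iUnion₂.1 hm1U with ⟨R₂, hR₂C, hm1R₂⟩
  have hR₂S : R₂ ⊆ S := by
    rw [hcover]; intro x hx; exact Set.mem_biUnion hR₂C hx
  obtain ⟨μ₂, hμ₂Sig, hform₂⟩ := sig_class' (hC R₂ hR₂C)
  have hμ₂R : μ₂ ∈ R₂ := by
    rcases hform₂ with h | ⟨-, h⟩ <;> rw [h] <;> simp [Sig]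
  have hmμ₂ : m ≤ μ₂ := by
    have := hR₂S hμ₂R; rw [hS2] at this; exact this
  have hsub₂ : {x : ℤ | x - (m + 1) ∈ Sig} ⊆ R₂ := by
    rcases hform₂ with h | ⟨-, h⟩
    · have hμ : m + 1 - μ₂ ∈ Sig := by rw [h] at hm1R₂; exact hm1R₂
      simp only [Sig, Set.mem_setOf_eq] at hμ
      have : μ₂ = m + 1 := by omega
      rw [h, this]
    · have hμ : μ₂ ≤ m + 1 := by rw [h] at hm1R₂; exact hm1R₂
      rw [h]
      intro x hx
      simp only [Sig, Set.mem_setOf_eq] at hx ⊢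
      omega
  refine ⟨R₁, hR₁C, R₂, hR₂C, hR₁, hsub₂, ?_, ?_⟩
  · apply Set.Subset.antisymm
    · intro x hx
      rw [hS2, Set.mem_setOf_eq] at hx
      by_cases hx1 : x = m + 1
      · exact Or.inr (hsub₂ (by simp [Sig]; omega))
      · refine Or.inl ?_
        rw [hR₁]
        simp only [Sig, Set.mem_setOf_eq]
        omega
    · exact Set.union_subset hR₁S hR₂S
  · apply Set.Subset.antisymm
    · refine Set.union_subset ?_ ?_
      · rw [hR₁]; exact Set.subset_union_left
      · intro x hx
        have hxS : m ≤ x := by have := hR₂S hx; rwa [hS2] at this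
        simp only [Set.mem_union, Sig, Set.mem_setOf_eq]
        omega
    · refine Set.union_subset ?_ (fun x hx => Or.inr (hsub₂ hx))
      rw [hR₁]; exact Set.subset_union_left

/-- Suppose independence fails at a constructible ideal `S` of `Σ = ℕ ∖ {1}`:
`S = ⋃_{R∈𝒞} R` for a finite family `𝒞` of constructible ideals with `S ∉ 𝒞`, and let
`m = min S`. Then: (1) if `m ≠ 3`, then `S = p + (2+ℕ)` for `p = m − 2 ∈ Σ`, and there
are `R₁, R₂ ∈ 𝒞` with `R₁ = p + (2+Σ) = m + Σ` and `R₂ ⊇ p + (3+Σ) = (m+1) + Σ`, with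
`S = R₁ ∪ R₂ = (m + Σ) ∪ ((m+1) + Σ)`; (2) if `m = 3`, then `S = 3 + ℕ` and there are
`R₁, R₂ ∈ 𝒞` with `R₁ = 3 + Σ`, `R₂ ⊇ 4 + Σ`, and `S = R₁ ∪ R₂ = (3 + Σ) ∪ (4 + Σ)`. -/
theorem statement18 (S : Set ℤ) (hS : S ∈ SCIdeals)
    (C : Finset (Set ℤ)) (hC : ∀ R ∈ C, R ∈ SCIdeals) (hSC : S ∉ C)
    (hcover : S = ⋃ R ∈ C, R)
    (m : ℤ) (hm : m ∈ S) (hmin : ∀ x ∈ S, m ≤ x) :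
    (m ≠ 3 →
      m - 2 ∈ Sig ∧ S = {x : ℤ | (m - 2) + 2 ≤ x} ∧
      ∃ R₁ ∈ C, ∃ R₂ ∈ C,
        R₁ = {x : ℤ | x - m ∈ Sig} ∧ {x : ℤ | x - (m + 1) ∈ Sig} ⊆ R₂ ∧
        S = R₁ ∪ R₂ ∧
        R₁ ∪ R₂ = {x : ℤ | x - m ∈ Sig} ∪ {x : ℤ | x - (m + 1) ∈ Sig}) ∧
    (m = 3 →
      S = {x : ℤ | 3 ≤ x} ∧
      ∃ R₁ ∈ C, ∃ R₂ ∈ C,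
        R₁ = {x : ℤ | x - 3 ∈ Sig} ∧ {x : ℤ | x - 4 ∈ Sig} ⊆ R₂ ∧
        S = R₁ ∪ R₂ ∧
        R₁ ∪ R₂ = {x : ℤ | x - 3 ∈ Sig} ∪ {x : ℤ | x - 4 ∈ Sig}) := by
    -- Step 1: show S = {x | m ≤ x} with 2 ≤ m
  obtain ⟨μ, hμSig, hform⟩ := sig_class' hS
  have hμS : μ ∈ S := by
    rcases hform with h | ⟨-, h⟩ <;> rw [h] <;> simp [Sig]
  have hmμ : m ≤ μ := hmin μ hμS
  have hmain : 2 ≤ m ∧ S = {x : ℤ | m ≤ x} := by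
    rcases hform with h | ⟨h2, h⟩
    · -- impossible case: S = μ + Σ
      exfalso
      have hμm : μ = m := by
        have : m - μ ∈ Sig := by rw [h] at hm; exact hm
        simp only [Sig, Set.mem_setOf_eq] at this
        omega
      rw [hμm] at h
      have hmU : m ∈ ⋃ R ∈ C, R := hcover ▸ hm
      rcases Set.mem_iUnion₂.1 hmU with ⟨R, hRC, hmR⟩
      have hRS : R ⊆ S := by
        rw [hcover]; intro x hx; exact Set.mem_biUnion hRC hx
      obtain ⟨ν, hνSig, hformR⟩ := sig_class' (hC R hRC)
      have hνR : ν ∈ R := by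
        rcases hformR with h' | ⟨-, h'⟩ <;> rw [h'] <;> simp [Sig]
      have hmν : m ≤ ν := hmin ν (hRS hνR)
      rcases hformR with h' | ⟨-, h'⟩
      · have : m - ν ∈ Sig := by rw [h'] at hmR; exact hmR
        simp only [Sig, Set.mem_setOf_eq] at this
        have hνm : ν = m := by omega
        exact hSC (by rwa [h', hνm, ← h] at hRC)
      · have hνm : ν = m := le_antisymm (by rw [h'] at hmR; exact hmR) hmν
        have : m + 1 ∈ S := hRS (by rw [h', hνm]; simp only [Set.mem_setOf_eq]; omega)
        rw [h] at this
        simp only [Sig, Set.mem_setOf_eq] at this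
        omega
    · have hμm : μ = m := le_antisymm (by rw [h] at hm; exact hm) hmμ
      subst hμm
      exact ⟨h2, h⟩
  obtain ⟨h2m, hS2⟩ := hmain
  obtain ⟨R₁, hR₁C, R₂, hR₂C, hR₁, hsub₂, hSU, hUU⟩ :=
    cover_lemma S C hC hSC hcover m hS2
  constructor
  · intro hm3
    refine ⟨by simp only [Sig, Set.mem_setOf_eq]; omega, by rw [hS2]; ext x; simp only [Set.mem_setOf_eq]; omega,
      R₁, hR₁C, R₂, hR₂C, hR₁, hsub₂, hSU, hUU⟩
  · intro hm3
    subst hm3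
    refine ⟨by rw [hS2], R₁, hR₁C, R₂, hR₂C, hR₁, ?_, hSU, ?_⟩
    · have h4 : (4 : ℤ) = 3 + 1 := by norm_num
      rw [h4]; exact hsub₂
    · have h4 : (4 : ℤ) = 3 + 1 := by norm_num
      rw [h4]; exact hUU
end

section
/- Let P be a right LCM submonoid of a group G, with group of units P* := P ∩ P⁻¹. Suppose P satisfies condition (D2): whenever s₀ ∈ P, s₁ ∈ s₀P, and F ⊆ P is a finite subset with s₁P ∩ (P ∖ ⋃_{q∈F} qP) ≠ ∅, then for every x ∈ P* ∖ {e} there is s₂ ∈ s₁P satisfying s₂P ∩ (P ∖ ⋃_{q∈F} qP) ≠ ∅ and s₀⁻¹s₂P ∩ xs₀⁻¹s₂P = ∅. Then for every u ∈ P* ∖ {e} and every finite subset F ⊆ P ∖ P*, there exists t ∈ P ∖ ⋃_{q∈F} qP such that utP ≠ tP. -/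
namespace PaperToeplitz

/-- Let `P` be a right LCM submonoid of a group `G` (the intersection of two principal
right ideals `pP ∩ qP` is empty or of the form `rP`), with group of units
`P* = P ∩ P⁻¹`. If `P` satisfies condition (D2), then for every `u ∈ P* ∖ {e}` and every
finite `F ⊆ P ∖ P*` there exists `t ∈ P ∖ ⋃_{q∈F} qP` with `utP ≠ tP`. -/
theorem statement19 {G : Type*} [Group G] (P : Submonoid G)
    (hLCM : ∀ p q : P, lcos P (p : G) ∩ lcos P (q : G) = ∅ ∨
      ∃ r : P, lcos P (p : G) ∩ lcos P (q : G) = lcos P (r : G))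
    (hD2 : ∀ s₀ : G, s₀ ∈ P → ∀ s₁ ∈ lcos P s₀,
      ∀ F : Finset G, (↑F : Set G) ⊆ (P : Set G) →
      (lcos P s₁ ∩ ((P : Set G) \ ⋃ q ∈ F, lcos P q)).Nonempty →
      ∀ x : G, x ∈ P → x⁻¹ ∈ P → x ≠ 1 →
        ∃ s₂ ∈ lcos P s₁,
          (lcos P s₂ ∩ ((P : Set G) \ ⋃ q ∈ F, lcos P q)).Nonempty ∧
          lcos P (s₀⁻¹ * s₂) ∩ lcos P (x * (s₀⁻¹ * s₂)) = ∅) :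
    ∀ u : G, u ∈ P → u⁻¹ ∈ P → u ≠ 1 →
      ∀ F : Finset G, (∀ q ∈ F, q ∈ P ∧ q⁻¹ ∉ P) →
        ∃ t : G, t ∈ P ∧ t ∉ (⋃ q ∈ F, lcos P q) ∧
          lcos P (u * t) ≠ lcos P t := by

  intro u hu hu' hune F hF
  have h1 : (1:G) ∈ lcos P (1:G) := by simp [lcos]
  have hFsub : (↑F : Set G) ⊆ (P : Set G) := fun q hq => (hF q hq).1
  have hne : (lcos P (1:G) ∩ ((P : Set G) \ ⋃ q ∈ F, lcos P q)).Nonempty := by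
    refine ⟨1, h1, P.one_mem, ?_⟩
    simp only [Set.mem_iUnion, not_exists]
    intro q hq hmem
    exact (hF q hq).2 (by simpa [lcos] using hmem)
  obtain ⟨s₂, hs₂, ⟨t, ht1, ht2, ht3⟩, hdisj⟩ :=
    hD2 1 P.one_mem 1 h1 F hFsub hne u hu hu' hune
  simp only [inv_one, one_mul] at hdisj
  refine ⟨t, ht2, ht3, ?_⟩
  intro heq
  have htt : t ∈ lcos P t := by simp [lcos]
  have hut : t ∈ lcos P (u * t) := heq ▸ htt
  have hts : s₂⁻¹ * t ∈ P := by simpa [lcos, inv_one] using ht1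
  have h2 : t ∈ lcos P (u * s₂) := by
    have : (u * s₂)⁻¹ * t = (s₂⁻¹ * t) * ((u * t)⁻¹ * t) := by group
    show (u * s₂)⁻¹ * t ∈ P
    rw [this]
    exact P.mul_mem hts hut
  have : t ∈ lcos P s₂ ∩ lcos P (u * s₂) := ⟨by simpa [lcos, inv_one] using ht1, h2⟩
  rw [hdisj] at this
  exact this


end PaperToeplitz
end
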